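/- arXiv:math/0608336 — 6 statements merged into one kernel-verified Lean document; each statement's English description precedes it below -/
import Mathlib

section
/- If a Boolean algebra B carries a strictly positive nonatomic finitely additive probability measure μ, then B \ {0} can be decomposed as ⋃_{n<ω} B_n with B_n ⊆ B_{n+1}, int(B_n) ≥ 2^{-n}, and every a ∈ B_n contains two disjoint nonzero elements of B_{n+1}. -/
open scoped symmDiff

/-- The intersection number of a family `A` of elements of a Boolean algebra:
the supremum of `r ∈ [0,1]` such that every finite sequence from `A` (with repetitions)
has a subsequence of proportion at least `r` with nonzero meet. -/
noncomputable def interNum {α : Type*} [BooleanAlgebra α] (A : Set α) : ℝ :=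
  sSup {r : ℝ | 0 ≤ r ∧ r ≤ 1 ∧ ∀ (m : ℕ) (f : Fin m → α), (∀ i, f i ∈ A) →
    ∃ s : Finset (Fin m), r * (m : ℝ) ≤ (s.card : ℝ) ∧ (s.Nonempty → s.inf f ≠ ⊥)}

/-- A finitely additive (nonnegative, finite) measure on a Boolean algebra. -/
def IsFAMeasure {α : Type*} [BooleanAlgebra α] (μ : α → ℝ) : Prop :=
  μ ⊥ = 0 ∧ (∀ a, 0 ≤ μ a) ∧ ∀ a b : α, a ⊓ b = ⊥ → μ (a ⊔ b) = μ a + μ b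

/-- A finitely additive probability measure on a Boolean algebra. -/
def IsFAProb {α : Type*} [BooleanAlgebra α] (μ : α → ℝ) : Prop :=
  IsFAMeasure μ ∧ μ ⊤ = 1

/-- `μ` is strictly positive. -/
def StrictlyPositive {α : Type*} [BooleanAlgebra α] (μ : α → ℝ) : Prop :=
  ∀ a : α, a ≠ ⊥ → 0 < μ a

/-- `μ` is nonatomic: for every `ε > 0` there is a finite partition of `⊤`
into elements of measure `< ε`. -/
def Nonatomic {α : Type*} [BooleanAlgebra α] (μ : α → ℝ) : Prop :=
  ∀ ε : ℝ, 0 < ε → ∃ s : Finset α,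
    (↑s : Set α).PairwiseDisjoint id ∧ s.sup id = ⊤ ∧ ∀ a ∈ s, μ a < ε

section Aux

variable {α : Type*} [BooleanAlgebra α]

/-- Finite additivity over a pairwise disjoint family. -/
lemma fa_sum {μ : α → ℝ} (hμ : IsFAMeasure μ) {ι : Type*} [DecidableEq ι]
    (s : Finset ι) (g : ι → α)
    (hd : ∀ i ∈ s, ∀ j ∈ s, i ≠ j → g i ⊓ g j = ⊥) :
    μ (s.sup g) = ∑ i ∈ s, μ (g i) := by
  induction s using Finset.induction_on with
  | empty => simpa using hμ.1
  | @insert a s ha ih =>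
    have hdis : g a ⊓ s.sup g = ⊥ := by
      rw [Finset.sup_inf_distrib_left]
      refine le_bot_iff.mp (Finset.sup_le fun j hj => ?_)
      rw [hd a (Finset.mem_insert_self a s) j (Finset.mem_insert_of_mem hj)
        (fun h => ha (h ▸ hj))]
    rw [Finset.sup_insert, Finset.sum_insert ha, hμ.2.2 _ _ hdis,
      ih (fun i hi j hj hij =>
        hd i (Finset.mem_insert_of_mem hi) j (Finset.mem_insert_of_mem hj) hij)]

/-- Monotonicity of a finitely additive measure. -/
lemma fa_mono {μ : α → ℝ} (hμ : IsFAMeasure μ) {a b : α} (h : b ≤ a) : μ b ≤ μ a := by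
  have hd : b ⊓ (a \ b) = ⊥ := disjoint_iff.mp disjoint_sdiff_self_right
  have hadd := hμ.2.2 b (a \ b) hd
  rw [sup_sdiff_cancel_right h] at hadd
  have := hμ.2.1 (a \ b)
  linarith

/-- The `2^m` "atoms" generated by a finite family cover `⊤`. -/
lemma atoms_cover {ι : Type*} [Fintype ι] [DecidableEq ι] (f : ι → α) (s : Finset ι) :
    (Finset.univ : Finset (ι → Bool)).sup
      (fun σ => s.inf (fun i => if σ i = true then f i else (f i)ᶜ)) = ⊤ := by
  induction s using Finset.induction_on with
  | empty =>
    simp only [Finset.inf_empty]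
    exact Finset.sup_const Finset.univ_nonempty _
  | @insert a s ha ih =>
    refine le_antisymm le_top ?_
    conv_lhs => rw [← ih]
    refine Finset.sup_le fun σ _ => ?_
    set F : (ι → Bool) → ι → α := fun τ i => if τ i = true then f i else (f i)ᶜ with hF
    have hupd : ∀ b : Bool, s.inf (F (Function.update σ a b)) = s.inf (F σ) := by
      intro b
      refine Finset.inf_congr rfl fun i hi => ?_
      have : i ≠ a := fun h => ha (h ▸ hi)
      simp [F, Function.update_of_ne this]
    have key : ∀ b : Bool, F (Function.update σ a b) a ⊓ s.inf (F σ) ≤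
        Finset.univ.sup (fun τ => (insert a s).inf (F τ)) := by
      intro b
      have h1 : F (Function.update σ a b) a ⊓ s.inf (F σ)
          = (insert a s).inf (F (Function.update σ a b)) := by
        rw [Finset.inf_insert, hupd b]
      rw [h1]
      exact Finset.le_sup (f := fun τ => (insert a s).inf (F τ)) (Finset.mem_univ _)
    have ht := key true
    have hf' := key false
    have hFt : F (Function.update σ a true) a = f a := by simp [F]
    have hFf : F (Function.update σ a false) a = (f a)ᶜ := by simp [F]
    rw [hFt] at ht; rw [hFf] at hf'
    have hdecomp : s.inf (F σ) = (f a ⊓ s.inf (F σ)) ⊔ ((f a)ᶜ ⊓ s.inf (F σ)) := by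
      rw [← inf_sup_right (f a) ((f a)ᶜ) (s.inf (F σ)), sup_compl_eq_top, top_inf_eq]
    rw [hdecomp]
    exact sup_le ht hf'

/-- Key counting lemma: if every element of the sequence has measure `> r`, then
some subsequence of proportion `≥ r` has nonzero meet. -/
lemma count_lemma {μ : α → ℝ} (hμ : IsFAProb μ) (r : ℝ) (hr : 0 < r)
    (m : ℕ) (f : Fin m → α) (hf : ∀ i, r < μ (f i)) :
    ∃ s : Finset (Fin m), r * (m : ℝ) ≤ (s.card : ℝ) ∧ (s.Nonempty → s.inf f ≠ ⊥) := by
  obtain ⟨⟨h0, hpos, hadd⟩, h1⟩ := hμ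
  rcases Nat.eq_zero_or_pos m with hm | hm
  · subst hm
    exact ⟨∅, by simp, fun h => absurd h (by simp)⟩
  by_contra hcon
  push_neg at hcon
  -- hcon : ∀ s, r * m ≤ card s → s.Nonempty ∧ s.inf f = ⊥
  set atomF : (Fin m → Bool) → α :=
    fun σ => Finset.univ.inf (fun i => if σ i = true then f i else (f i)ᶜ) with hatom
  have hatomle : ∀ (σ : Fin m → Bool) (i : Fin m),
      atomF σ ≤ (if σ i = true then f i else (f i)ᶜ) :=
    fun σ i => Finset.inf_le (Finset.mem_univ i)
  have hdisj : ∀ σ τ : Fin m → Bool, σ ≠ τ → atomF σ ⊓ atomF τ = ⊥ := by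
    intro σ τ hστ
    obtain ⟨i, hi⟩ := Function.ne_iff.mp hστ
    refine le_bot_iff.mp ?_
    have h1 := hatomle σ i
    have h2 := hatomle τ i
    cases hσi : σ i <;> cases hτi : τ i
    · exact absurd (hσi.trans hτi.symm) hi
    · rw [hσi] at h1; rw [hτi] at h2
      simp only [Bool.false_eq_true, if_false, if_true] at h1 h2
      calc atomF σ ⊓ atomF τ ≤ (f i)ᶜ ⊓ f i := inf_le_inf h1 h2
        _ = ⊥ := compl_inf_eq_bot
    · rw [hσi] at h1; rw [hτi] at h2
      simp only [Bool.false_eq_true, if_false, if_true] at h1 h2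
      calc atomF σ ⊓ atomF τ ≤ f i ⊓ (f i)ᶜ := inf_le_inf h1 h2
        _ = ⊥ := inf_compl_eq_bot
    · exact absurd (hσi.trans hτi.symm) hi
  have hcover : Finset.univ.sup atomF = ⊤ := atoms_cover f Finset.univ
  have hkey : ∀ σ : Fin m → Bool, atomF σ ≠ ⊥ →
      ((Finset.univ.filter (fun i => σ i = true)).card : ℝ) < r * m := by
    intro σ hσ
    by_contra hle
    push_neg at hle
    obtain ⟨hne, hbot⟩ := hcon _ hle
    have hlef : atomF σ ≤ (Finset.univ.filter (fun i => σ i = true)).inf f := by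
      refine Finset.le_inf fun i hi => ?_
      have hmem := (Finset.mem_filter.mp hi).2
      simpa [hmem] using hatomle σ i
    exact hσ (le_bot_iff.mp (hbot ▸ hlef))
  have hsum1 : ∑ σ : Fin m → Bool, μ (atomF σ) = 1 := by
    rw [← fa_sum ⟨h0, hpos, hadd⟩ Finset.univ atomF
      (fun i _ j _ hij => hdisj i j hij), hcover, h1]
  have hfi : ∀ i : Fin m,
      μ (f i) = ∑ σ : Fin m → Bool, (if σ i = true then μ (atomF σ) else 0) := by
    intro i
    have hrepr : f i = Finset.univ.sup (fun σ => if σ i = true then atomF σ else ⊥) := by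
      have h2 : f i = f i ⊓ Finset.univ.sup atomF := by rw [hcover, inf_top_eq]
      rw [h2, Finset.sup_inf_distrib_left]
      refine Finset.sup_congr rfl fun σ _ => ?_
      by_cases hσi : σ i = true
      · rw [if_pos hσi]
        exact inf_eq_right.mpr (by simpa [hσi] using hatomle σ i)
      · rw [if_neg hσi]
        have : atomF σ ≤ (f i)ᶜ := by simpa [hσi] using hatomle σ i
        refine le_bot_iff.mp ?_
        calc f i ⊓ atomF σ ≤ f i ⊓ (f i)ᶜ := inf_le_inf_left _ this
          _ = ⊥ := inf_compl_eq_bot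
    rw [hrepr, fa_sum ⟨h0, hpos, hadd⟩ Finset.univ _ ?_]
    · refine Finset.sum_congr rfl fun σ _ => ?_
      by_cases hσi : σ i = true <;> simp [hσi, h0]
    · intro σ _ τ _ hστ
      by_cases hσi : σ i = true <;> by_cases hτi : τ i = true <;>
        simp [hσi, hτi, hdisj σ τ hστ]
  have hswap : ∑ i : Fin m, μ (f i) =
      ∑ σ : Fin m → Bool,
        ((Finset.univ.filter (fun i => σ i = true)).card : ℝ) * μ (atomF σ) := by
    calc ∑ i : Fin m, μ (f i)
        = ∑ i : Fin m, ∑ σ : Fin m → Bool, (if σ i = true then μ (atomF σ) else 0) :=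
          Finset.sum_congr rfl fun i _ => hfi i
      _ = ∑ σ : Fin m → Bool, ∑ i : Fin m, (if σ i = true then μ (atomF σ) else 0) :=
          Finset.sum_comm
      _ = _ := by
          refine Finset.sum_congr rfl fun σ _ => ?_
          rw [← Finset.sum_filter, Finset.sum_const, nsmul_eq_mul]
  obtain ⟨σ₀, -, hσ₀⟩ : ∃ σ ∈ (Finset.univ : Finset (Fin m → Bool)), 0 < μ (atomF σ) := by
    by_contra hc
    push_neg at hc
    have : ∑ σ : Fin m → Bool, μ (atomF σ) ≤ 0 :=
      Finset.sum_nonpos fun σ _ => hc σ (Finset.mem_univ σ)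
    linarith
  have hσ₀ne : atomF σ₀ ≠ ⊥ := fun h => by rw [h, h0] at hσ₀; exact lt_irrefl 0 hσ₀
  have hstrict : ∑ σ : Fin m → Bool,
      ((Finset.univ.filter (fun i => σ i = true)).card : ℝ) * μ (atomF σ)
      < ∑ σ : Fin m → Bool, (r * m) * μ (atomF σ) := by
    refine Finset.sum_lt_sum (fun σ _ => ?_) ⟨σ₀, Finset.mem_univ _,
      mul_lt_mul_of_pos_right (hkey σ₀ hσ₀ne) hσ₀⟩
    rcases eq_or_ne (atomF σ) ⊥ with h | h
    · simp [h, h0]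
    · exact mul_le_mul_of_nonneg_right (hkey σ h).le (hpos _)
  have hhigh : ∑ σ : Fin m → Bool, (r * m) * μ (atomF σ) = r * m := by
    rw [← Finset.mul_sum, hsum1, mul_one]
  have hlow : r * m ≤ ∑ i : Fin m, μ (f i) := by
    have h3 : ∑ _i : Fin m, r ≤ ∑ i : Fin m, μ (f i) :=
      Finset.sum_le_sum fun i _ => (hf i).le
    have h4 : ∑ _i : Fin m, r = (m : ℝ) * r := by
      rw [Finset.sum_const, Finset.card_univ, Fintype.card_fin, nsmul_eq_mul]
    rw [h4, mul_comm] at h3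
    exact h3
  rw [hswap] at hlow
  rw [hhigh] at hstrict
  linarith

/-- Given small pieces summing to at least `T`, some subcollection sums to `[T, T + ε)`. -/
lemma subset_sum {ι : Type*} [DecidableEq ι] (s : Finset ι) (g : ι → ℝ) (ε T : ℝ)
    (hgε : ∀ i ∈ s, g i < ε) (hT : 0 < T)
    (hTs : T ≤ ∑ i ∈ s, g i) :
    ∃ u ⊆ s, T ≤ ∑ i ∈ u, g i ∧ ∑ i ∈ u, g i < T + ε := by
  classical
  set P := s.powerset.filter (fun u => T ≤ ∑ i ∈ u, g i) with hP
  have hsP : s ∈ P := Finset.mem_filter.mpr ⟨Finset.mem_powerset_self s, hTs⟩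
  obtain ⟨u, huP, humin⟩ := P.exists_min_image Finset.card ⟨s, hsP⟩
  obtain ⟨husub, hTu⟩ := Finset.mem_filter.mp huP
  have husub' : u ⊆ s := Finset.mem_powerset.mp husub
  have hune : u.Nonempty := by
    rcases Finset.eq_empty_or_nonempty u with h | h
    · rw [h, Finset.sum_empty] at hTu; linarith
    · exact h
  obtain ⟨j, hj⟩ := hune
  have herase : ∑ i ∈ u.erase j, g i < T := by
    by_contra hc
    push_neg at hc
    have hmem : u.erase j ∈ P := Finset.mem_filter.mpr
      ⟨Finset.mem_powerset.mpr ((Finset.erase_subset j u).trans husub'), hc⟩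
    have h5 := humin _ hmem
    have h6 := Finset.card_erase_lt_of_mem hj
    omega
  have hsum : g j + ∑ i ∈ u.erase j, g i = ∑ i ∈ u, g i := Finset.add_sum_erase _ _ hj
  have hgj : g j < ε := hgε j (husub' hj)
  exact ⟨u, husub', hTu, by linarith⟩

end Aux

theorem stmt3 {α : Type*} [BooleanAlgebra α] (μ : α → ℝ)
    (hμ : IsFAProb μ) (hsp : StrictlyPositive μ) (hna : Nonatomic μ) :
    ∃ B : ℕ → Set α,
      (∀ n : ℕ, ∀ a ∈ B n, a ≠ (⊥ : α)) ∧
      (∀ a : α, a ≠ ⊥ → ∃ n : ℕ, a ∈ B n) ∧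
      (∀ n : ℕ, B n ⊆ B (n + 1)) ∧
      (∀ n : ℕ, ((1 : ℝ) / 2) ^ n ≤ interNum (B n)) ∧
      (∀ n : ℕ, ∀ a ∈ B n, ∃ b c : α, b ∈ B (n + 1) ∧ c ∈ B (n + 1) ∧
        b ⊓ c = ⊥ ∧ b ≤ a ∧ c ≤ a) := by
  classical
  refine ⟨fun n => {a : α | ((1 : ℝ) / 2) ^ n < μ a}, ?_, ?_, ?_, ?_, ?_⟩
  · -- no ⊥
    intro n a ha hbot
    rw [Set.mem_setOf_eq, hbot, hμ.1.1] at ha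
    have := pow_pos (by norm_num : (0:ℝ) < 1/2) n
    linarith
  · -- coverage
    intro a ha
    obtain ⟨n, hn⟩ := exists_pow_lt_of_lt_one (hsp a ha) (by norm_num : (1:ℝ)/2 < 1)
    exact ⟨n, hn⟩
  · -- monotone
    intro n a ha
    rw [Set.mem_setOf_eq] at ha ⊢
    have : ((1:ℝ)/2) ^ (n+1) ≤ ((1:ℝ)/2) ^ n :=
      pow_le_pow_of_le_one (by norm_num) (by norm_num) (Nat.le_succ n)
    linarith
  · -- intersection number
    intro n
    refine le_csSup ⟨1, fun r hr => hr.2.1⟩ ?_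
    refine ⟨pow_nonneg (by norm_num) n, pow_le_one₀ (by norm_num) (by norm_num), ?_⟩
    intro m f hfm
    exact count_lemma hμ _ (pow_pos (by norm_num) n) m f (fun i => hfm i)
  · -- splitting
    intro n a ha
    rw [Set.mem_setOf_eq] at ha
    set δ : ℝ := μ a - ((1:ℝ)/2) ^ n with hδ
    have hδeq : μ a = ((1:ℝ)/2) ^ n + δ := by simp only [hδ]; ring
    have hδpos : 0 < δ := by simp only [hδ]; linarith
    clear_value δ
    obtain ⟨t, hpd, htop, hε⟩ := hna (δ/2) (by linarith)
    have hdisj2 : ∀ i ∈ t, ∀ j ∈ t, i ≠ j → (a ⊓ i) ⊓ (a ⊓ j) = ⊥ := by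
      intro i hi j hj hij
      have h := hpd hi hj hij
      exact disjoint_iff.mp (h.mono inf_le_right inf_le_right)
    have hsupa : t.sup (fun j => a ⊓ j) = a := by
      have := Finset.sup_inf_distrib_left t id a
      simp only [id] at this
      rw [← this, htop, inf_top_eq]
    have hμa : μ a = ∑ j ∈ t, μ (a ⊓ j) := by
      have h := fa_sum hμ.1 t (fun j => a ⊓ j) hdisj2
      rwa [hsupa] at h
    have hpiece : ∀ j ∈ t, μ (a ⊓ j) < δ/2 :=
      fun j hj => lt_of_le_of_lt (fa_mono hμ.1 inf_le_right) (hε j hj)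
    have hhalf : ((1:ℝ)/2) ^ n = 2 * ((1:ℝ)/2) ^ (n+1) := by rw [pow_succ]; ring
    have hhpos : (0:ℝ) < ((1:ℝ)/2) ^ (n+1) := pow_pos (by norm_num) _
    set T : ℝ := ((1:ℝ)/2) ^ (n+1) + δ/2 with hT
    clear_value T
    have hTpos : 0 < T := by rw [hT]; positivity
    have hTle : T ≤ ∑ j ∈ t, μ (a ⊓ j) := by
      rw [← hμa, hδeq, hhalf, hT]; linarith
    obtain ⟨u, hus, hTu, huT⟩ := subset_sum t (fun j => μ (a ⊓ j)) (δ/2) T hpiece hTpos hTle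
    have hμb : μ (u.sup (fun j => a ⊓ j)) = ∑ j ∈ u, μ (a ⊓ j) :=
      fa_sum hμ.1 u _ (fun i hi j hj hij => hdisj2 i (hus hi) j (hus hj) hij)
    have hμc : μ ((t \ u).sup (fun j => a ⊓ j)) = ∑ j ∈ t \ u, μ (a ⊓ j) :=
      fa_sum hμ.1 (t \ u) _
        (fun i hi j hj hij =>
          hdisj2 i (Finset.sdiff_subset hi) j (Finset.sdiff_subset hj) hij)
    have hsplit : ∑ j ∈ t \ u, μ (a ⊓ j) + ∑ j ∈ u, μ (a ⊓ j) = ∑ j ∈ t, μ (a ⊓ j) :=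
      Finset.sum_sdiff hus
    refine ⟨u.sup (fun j => a ⊓ j), (t \ u).sup (fun j => a ⊓ j), ?_, ?_, ?_, ?_, ?_⟩
    · rw [Set.mem_setOf_eq, hμb]
      have : T = ((1:ℝ)/2) ^ (n+1) + δ/2 := hT
      linarith
    · rw [Set.mem_setOf_eq, hμc]
      have h7 := hδeq
      have h8 : ∑ j ∈ t \ u, μ (a ⊓ j) = μ a - ∑ j ∈ u, μ (a ⊓ j) := by
        rw [hμa]; linarith
      rw [h8, h7, hhalf]
      have : T = ((1:ℝ)/2) ^ (n+1) + δ/2 := hT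
      linarith
    · refine disjoint_iff.mp ?_
      rw [Finset.disjoint_sup_left]
      intro j hj
      rw [Finset.disjoint_sup_right]
      intro k hk
      have hkt : k ∈ t := (Finset.mem_sdiff.mp hk).1
      have hku : k ∉ u := (Finset.mem_sdiff.mp hk).2
      have hjk : j ≠ k := fun h => hku (h ▸ hj)
      exact (hpd (hus hj) hkt hjk).mono inf_le_right inf_le_right
    · exact Finset.sup_le fun j _ => inf_le_left
    · exact Finset.sup_le fun j _ => inf_le_left
end

section
/- (Kelley's lemma) Let B be a Boolean algebra and A ⊆ B \ {0} nonempty. Then int(A) = max over all finitely additive probability measures ν on B of inf_{a ∈ A} ν(a); in particular the maximum is attained. -/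
open scoped symmDiff

open scoped Classical

section KelleyAux

variable {α : Type*} [BooleanAlgebra α]

/-- The "Stone space": maximal ideals of the Boolean ring associated to `α`. -/
def US (α : Type*) [BooleanAlgebra α] : Type _ :=
  {I : Ideal (AsBoolRing α) // I.IsMaximal}

/-- Indicator function of `b` on the Stone space. -/
noncomputable def ind (b : α) : US α → ℝ :=
  fun I => if toBoolRing b ∈ I.1 then 0 else 1

lemma ind_nonneg (b : α) (u : US α) : 0 ≤ ind b u := by
  unfold ind; split <;> norm_num

lemma ind_le_one (b : α) (u : US α) : ind b u ≤ 1 := by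
  unfold ind; split <;> norm_num

lemma ind_bot (u : US α) : ind (⊥ : α) u = 0 := by
  unfold ind
  rw [if_pos]
  rw [toBoolRing_bot]
  exact u.1.zero_mem

lemma ind_top (u : US α) : ind (⊤ : α) u = 1 := by
  unfold ind
  rw [if_neg]
  rw [toBoolRing_top]
  exact (Ideal.ne_top_iff_one _).1 u.2.ne_top

lemma mem_of_le_mem {x y : α} (h : x ≤ y) {u : US α}
    (hy : toBoolRing y ∈ u.1) : toBoolRing x ∈ u.1 := by
  have hx : toBoolRing x = toBoolRing x * toBoolRing y := by
    rw [← toBoolRing_inf, inf_eq_left.2 h]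
  rw [hx]
  exact u.1.mul_mem_left _ hy

lemma ind_mono {x y : α} (h : x ≤ y) (u : US α) : ind x u ≤ ind y u := by
  unfold ind
  by_cases hy : toBoolRing y ∈ u.1
  · rw [if_pos (mem_of_le_mem h hy), if_pos hy]
  · split <;> norm_num

lemma toBoolRing_sup_disj {x y : α} (h : x ⊓ y = ⊥) :
    toBoolRing (x ⊔ y) = toBoolRing x + toBoolRing y := by
  have : x ⊔ y = x ∆ y := (Disjoint.symmDiff_eq_sup (disjoint_iff.2 h)).symm
  rw [this, toBoolRing_symmDiff]

lemma ind_add_disj {x y : α} (h : x ⊓ y = ⊥) (u : US α) :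
    ind (x ⊔ y) u = ind x u + ind y u := by
  have hprime : u.1.IsPrime := u.2.isPrime
  have hxy : toBoolRing x * toBoolRing y ∈ u.1 := by
    rw [← toBoolRing_inf, h, toBoolRing_bot]; exact u.1.zero_mem
  have hnot : toBoolRing x ∈ u.1 ∨ toBoolRing y ∈ u.1 := hprime.mem_or_mem hxy
  unfold ind
  rw [toBoolRing_sup_disj h]
  by_cases hx : toBoolRing x ∈ u.1 <;> by_cases hy : toBoolRing y ∈ u.1
  · rw [if_pos (u.1.add_mem hx hy), if_pos hx, if_pos hy]; norm_num
  · rw [if_neg, if_pos hx, if_neg hy]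
    · norm_num
    · intro hs
      exact hy (by simpa using u.1.sub_mem hs hx)
  · rw [if_neg, if_neg hx, if_pos hy]
    · norm_num
    · intro hs
      exact hx (by simpa using u.1.sub_mem hs hy)
  · exact absurd hnot (by tauto)

lemma exists_us_not_mem {x : α} (hx : x ≠ ⊥) :
    ∃ u : US α, toBoolRing x ∉ u.1 := by
  have hJ : Ideal.span {toBoolRing xᶜ} ≠ (⊤ : Ideal (AsBoolRing α)) := by
    intro h
    have h1 : (1 : AsBoolRing α) ∈ Ideal.span {toBoolRing xᶜ} := h ▸ Submodule.mem_top
    rw [Ideal.mem_span_singleton] at h1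
    obtain ⟨c, hc⟩ := h1
    apply hx
    have : toBoolRing x * 1 = toBoolRing x * (toBoolRing xᶜ * c) := by rw [← hc]
    rw [mul_one, ← mul_assoc, ← toBoolRing_inf, inf_compl_eq_bot, toBoolRing_bot,
      zero_mul] at this
    have := congrArg ofBoolRing this
    rwa [ofBoolRing_toBoolRing, ofBoolRing_zero] at this
  obtain ⟨M, hM, hle⟩ := Ideal.exists_le_maximal _ hJ
  refine ⟨⟨M, hM⟩, fun hxM => ?_⟩
  have hc : toBoolRing xᶜ ∈ M := hle (Ideal.subset_span rfl)
  have : toBoolRing x + toBoolRing xᶜ ∈ M := M.add_mem hxM hc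
  rw [← toBoolRing_symmDiff] at this
  have hx2 : x ∆ xᶜ = ⊤ := by
    rw [Disjoint.symmDiff_eq_sup disjoint_compl_right, sup_compl_eq_top]
  rw [hx2, toBoolRing_top] at this
  exact hM.ne_top ((Ideal.eq_top_iff_one M).2 this)

lemma exists_us_ind_one {x : α} (hx : x ≠ ⊥) :
    ∃ u : US α, ∀ y, x ≤ y → ind y u = 1 := by
  obtain ⟨u, hu⟩ := exists_us_not_mem hx
  refine ⟨u, fun y hy => ?_⟩
  unfold ind
  rw [if_neg (fun h => hu (mem_of_le_mem hy h))]

lemma us_nonempty (h : (⊤ : α) ≠ ⊥) : Nonempty (US α) := by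
  obtain ⟨u, _⟩ := exists_us_not_mem h
  exact ⟨u⟩

/-- The defining set for the intersection number. -/
def TS (A : Set α) : Set ℝ :=
  {r : ℝ | 0 ≤ r ∧ r ≤ 1 ∧ ∀ (m : ℕ) (f : Fin m → α), (∀ i, f i ∈ A) →
    ∃ s : Finset (Fin m), r * (m : ℝ) ≤ (s.card : ℝ) ∧ (s.Nonempty → s.inf f ≠ ⊥)}

lemma interNum_def (A : Set α) : interNum A = sSup (TS A) := rfl

lemma zero_mem_TS (A : Set α) : (0 : ℝ) ∈ TS A := by
  refine ⟨le_rfl, zero_le_one, fun m f _ => ⟨∅, by simp, by simp⟩⟩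

lemma TS_bddAbove (A : Set α) : BddAbove (TS A) :=
  ⟨1, fun r hr => hr.2.1⟩

lemma interNum_nonneg (A : Set α) : 0 ≤ interNum A :=
  le_csSup (TS_bddAbove A) (zero_mem_TS A)

lemma interNum_le_one (A : Set α) : interNum A ≤ 1 :=
  csSup_le ⟨0, zero_mem_TS A⟩ fun _ hr => hr.2.1

noncomputable def sSupR (g : US α → ℝ) : ℝ := sSup (Set.range g)

lemma sSupR_le (hne : Nonempty (US α)) {g : US α → ℝ} {c : ℝ} (h : ∀ u, g u ≤ c) : sSupR g ≤ c := by
  haveI := hne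
  exact csSup_le (Set.range_nonempty g) (by rintro _ ⟨u, rfl⟩; exact h u)

lemma le_sSupR {g : US α → ℝ} {C : ℝ} (hb : ∀ v, g v ≤ C) (u : US α) :
    g u ≤ sSupR g :=
  le_csSup ⟨C, by rintro _ ⟨v, rfl⟩; exact hb v⟩ ⟨u, rfl⟩

lemma exists_near_sSupR (hne : Nonempty (US α)) {g : US α → ℝ} {C : ℝ} (hb : ∀ v, g v ≤ C) {ε : ℝ}
    (hε : 0 < ε) : ∃ u, sSupR g - ε < g u := by
  haveI := hne
  obtain ⟨_, ⟨u, rfl⟩, hu⟩ :=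
    exists_lt_of_lt_csSup (Set.range_nonempty g) (sub_lt_self _ hε)
  exact ⟨u, hu⟩

/-- Integer-weight version of the key lemma. -/
lemma keyA_nat (hne : Nonempty (US α)) {A : Set α} {r : ℝ} (hr : r ∈ TS A) (F : Finset α)
    (hF : ↑F ⊆ A) (n : α → ℕ) :
    r * (∑ a ∈ F, (n a : ℝ)) ≤ sSupR (fun u => ∑ a ∈ F, (n a : ℝ) * ind a u) := by
  haveI := hne
  have hbd : ∀ v, (∑ a ∈ F, (n a : ℝ) * ind a v) ≤ ∑ a ∈ F, (n a : ℝ) :=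
    fun v => Finset.sum_le_sum fun a _ => by
      have := ind_le_one a v
      have := ind_nonneg a v
      nlinarith [Nat.cast_nonneg (α := ℝ) (n a)]
  have hS0 : 0 ≤ sSupR (fun u => ∑ a ∈ F, (n a : ℝ) * ind a u) := by
    obtain ⟨u⟩ := hne
    refine le_trans ?_ (le_sSupR hbd u)
    exact Finset.sum_nonneg fun a _ =>
      mul_nonneg (Nat.cast_nonneg _) (ind_nonneg a u)
  set ι := (a : {x // x ∈ F}) × Fin (n a.1) with hι
  set m := Fintype.card ι with hmdef
  have hm : (m : ℝ) = ∑ a ∈ F, (n a : ℝ) := by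
    have h0 : m = ∑ a : {x // x ∈ F}, n a.1 := by
      rw [hmdef]
      unfold ι
      simp [Fintype.card_sigma]
    rw [h0]
    push_cast
    exact Finset.sum_attach F fun a => (n a : ℝ)
  set e := Fintype.equivFin ι with he
  set f : Fin m → α := fun j => ((e.symm j).1 : α) with hf
  have hfA : ∀ j, f j ∈ A := fun j => hF (e.symm j).1.2
  obtain ⟨s, hcard, hmeet⟩ := hr.2.2 m f hfA
  have hsum : ∀ φ : α → ℝ, (∑ j : Fin m, φ (f j)) = ∑ a ∈ F, (n a : ℝ) * φ a := by
    intro φ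
    have h1 : (∑ j : Fin m, φ (f j)) = ∑ x : ι, φ (x.1 : α) :=
      Equiv.sum_comp e.symm fun x => φ (x.1 : α)
    rw [h1, ← Finset.univ_sigma_univ, Finset.sum_sigma]
    simp only [Finset.sum_const, Finset.card_univ, Fintype.card_fin, nsmul_eq_mul]
    exact Finset.sum_attach F fun a => (n a : ℝ) * φ a
  rcases s.eq_empty_or_nonempty with hs | hs
  · subst hs
    simp only [Finset.card_empty, Nat.cast_zero] at hcard
    rw [← hm]
    exact le_trans hcard hS0
  · have hx : s.inf f ≠ ⊥ := hmeet hs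
    obtain ⟨u, hu⟩ := exists_us_ind_one hx
    have hval : (s.card : ℝ) ≤ ∑ a ∈ F, (n a : ℝ) * ind a u := by
      rw [← hsum (fun a => ind a u)]
      have h2 : (∑ j ∈ s, ind (f j) u) ≤ ∑ j : Fin m, ind (f j) u :=
        Finset.sum_le_sum_of_subset_of_nonneg (Finset.subset_univ s)
          (fun j _ _ => ind_nonneg _ _)
      have h3 : (∑ j ∈ s, ind (f j) u) = s.card := by
        rw [Finset.sum_congr rfl fun j hj => hu (f j) (Finset.inf_le hj)]
        simp
      linarith
    calc r * (∑ a ∈ F, (n a : ℝ)) = r * m := by rw [hm]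
      _ ≤ s.card := hcard
      _ ≤ ∑ a ∈ F, (n a : ℝ) * ind a u := hval
      _ ≤ _ := le_sSupR hbd u

/-- Key lemma A: the sup of a nonnegative weighted sum of indicators is at
least `interNum A` times the total weight. -/
lemma keyA (hne : Nonempty (US α)) {A : Set α} (F : Finset α) (hF : ↑F ⊆ A) (w : α → ℝ)
    (hw : ∀ a, 0 ≤ w a) :
    interNum A * (∑ a ∈ F, w a) ≤ sSupR (fun u => ∑ a ∈ F, w a * ind a u) := by
  haveI := hne
  set S := sSupR (fun u => ∑ a ∈ F, w a * ind a u) with hSdef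
  have hbd : ∀ v, (∑ a ∈ F, w a * ind a v) ≤ ∑ a ∈ F, w a :=
    fun v => Finset.sum_le_sum fun a _ => by
      have := ind_le_one a v; have := ind_nonneg a v; nlinarith [hw a]
  have hS0 : 0 ≤ S := by
    obtain ⟨u⟩ := hne
    refine le_trans ?_ (le_sSupR hbd u)
    exact Finset.sum_nonneg fun a _ => mul_nonneg (hw a) (ind_nonneg a u)
  have main : ∀ r ∈ TS A, r * (∑ a ∈ F, w a) ≤ S := by
    intro r hr
    have hr0 : 0 ≤ r := hr.1
    have step : ∀ M : ℕ, 0 < M →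
        r * (∑ a ∈ F, w a) - r * F.card / M ≤ S := by
      intro M hM
      have hMR : (0 : ℝ) < M := by exact_mod_cast hM
      set n : α → ℕ := fun a => ⌊w a * M⌋₊ with hn
      have h1 := keyA_nat hne hr F hF n
      have h2 : sSupR (fun u => ∑ a ∈ F, (n a : ℝ) * ind a u) ≤ M * S := by
        refine sSupR_le hne fun u => ?_
        have hp : (∑ a ∈ F, (n a : ℝ) * ind a u)
            ≤ M * ∑ a ∈ F, w a * ind a u := by
          rw [Finset.mul_sum]
          refine Finset.sum_le_sum fun a _ => ?_
          have hfl : (n a : ℝ) ≤ w a * M :=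
            Nat.floor_le (mul_nonneg (hw a) (Nat.cast_nonneg M))
          have := ind_nonneg a u
          nlinarith
        refine hp.trans ?_
        have := le_sSupR hbd u
        nlinarith
      have h3 : (M : ℝ) * (∑ a ∈ F, w a) - F.card ≤ ∑ a ∈ F, (n a : ℝ) := by
        have : ∀ a ∈ F, w a * M - 1 ≤ (n a : ℝ) := fun a _ =>
          le_of_lt (Nat.sub_one_lt_floor _)
        calc (M : ℝ) * (∑ a ∈ F, w a) - F.card
            = ∑ a ∈ F, (w a * M - 1) := by
              rw [Finset.sum_sub_distrib, Finset.sum_const, ← Finset.sum_mul]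
              push_cast; ring
          _ ≤ _ := Finset.sum_le_sum this
      have h4 : r * ((M : ℝ) * (∑ a ∈ F, w a) - F.card) ≤ M * S := by
        calc r * ((M : ℝ) * (∑ a ∈ F, w a) - F.card)
            ≤ r * ∑ a ∈ F, (n a : ℝ) := by
              exact mul_le_mul_of_nonneg_left h3 hr0
          _ ≤ _ := le_trans h1 h2
      have h5 : r * (∑ a ∈ F, w a) - r * F.card / M
          = (r * ((M : ℝ) * (∑ a ∈ F, w a) - F.card)) / M := by
        field_simp
      rw [h5, div_le_iff₀ hMR]
      nlinarith
    by_contra hcon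
    push_neg at hcon
    set ε := r * (∑ a ∈ F, w a) - S with hε
    have hεpos : 0 < ε := by simp [hε]; linarith
    obtain ⟨M, hM⟩ := exists_nat_gt (max 1 (r * F.card / ε))
    have hM1 : 0 < M := by
      have : (1 : ℝ) < M := lt_of_le_of_lt (le_max_left _ _) hM
      exact_mod_cast lt_of_lt_of_le zero_lt_one this.le
    have hMR : (0 : ℝ) < M := by exact_mod_cast hM1
    have hlt : r * F.card / M < ε := by
      have h5 : r * F.card / ε < M := lt_of_le_of_lt (le_max_right _ _) hM
      rw [div_lt_iff₀ hεpos] at h5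
      rw [div_lt_iff₀ hMR]
      linarith
    have := step M hM1
    simp only [hε] at hlt
    linarith
  rcases eq_or_lt_of_le (Finset.sum_nonneg fun a _ => hw a) with h0 | h0
  · rw [← h0, mul_zero]; exact hS0
  · have : interNum A ≤ S / (∑ a ∈ F, w a) := by
      rw [interNum_def]
      refine csSup_le ⟨0, zero_mem_TS A⟩ fun r hr => ?_
      rw [le_div_iff₀ h0]
      exact main r hr
    calc interNum A * (∑ a ∈ F, w a) ≤ (S / (∑ a ∈ F, w a)) * (∑ a ∈ F, w a) :=
          mul_le_mul_of_nonneg_right this h0.le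
      _ = S := div_mul_cancel₀ _ h0.ne'

lemma fa_split {ν : α → ℝ} (hν : IsFAMeasure ν) (c x : α) (a : α) :
    ν (c ⊓ x) = ν ((c ⊓ a) ⊓ x) + ν ((c ⊓ aᶜ) ⊓ x) := by
  have hdisj : ((c ⊓ a) ⊓ x) ⊓ ((c ⊓ aᶜ) ⊓ x) = ⊥ := by
    have : ((c ⊓ a) ⊓ x) ⊓ ((c ⊓ aᶜ) ⊓ x) ≤ a ⊓ aᶜ :=
      le_inf (inf_le_left.trans (inf_le_left.trans inf_le_right))
        (inf_le_right.trans (inf_le_left.trans inf_le_right))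
    rw [inf_compl_eq_bot] at this
    exact le_bot_iff.1 this
  have hsup : ((c ⊓ a) ⊓ x) ⊔ ((c ⊓ aᶜ) ⊓ x) = c ⊓ x := by
    rw [inf_right_comm c a x, inf_right_comm c aᶜ x, ← inf_sup_left,
      sup_compl_eq_top, inf_top_eq]
  rw [← hsup, hν.2.2 _ _ hdisj]

/-- Main counting induction: relative to any `c`, a sequence's total measure
is bounded by the cardinality of a subsequence whose meet with `c` is nonzero. -/
lemma counting {ν : α → ℝ} (hν : IsFAMeasure ν) :
    ∀ (m : ℕ) (f : Fin m → α) (c : α), ∃ s : Finset (Fin m),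
      (c ≠ ⊥ → c ⊓ s.inf f ≠ ⊥) ∧ (∑ i, ν (c ⊓ f i)) ≤ s.card * ν c := by
  intro m
  induction m with
  | zero => exact fun f c => ⟨∅, by simp, by simp⟩
  | succ m ih =>
    intro f c
    set a := f (Fin.last m) with ha
    set g : Fin m → α := f ∘ Fin.castSucc with hg
    obtain ⟨s₁, hm₁, hs₁⟩ := ih g (c ⊓ a)
    obtain ⟨s₂, hm₂, hs₂⟩ := ih g (c ⊓ aᶜ)
    have hνc : ν (c ⊓ a) + ν (c ⊓ aᶜ) = ν c := by
      have := fa_split hν c ⊤ a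
      simpa using this.symm
    have hν1 : 0 ≤ ν (c ⊓ a) := hν.2.1 _
    have hν2 : 0 ≤ ν (c ⊓ aᶜ) := hν.2.1 _
    have htot : (∑ i, ν (c ⊓ f i))
        ≤ s₁.card * ν (c ⊓ a) + s₂.card * ν (c ⊓ aᶜ) + ν (c ⊓ a) := by
      rw [Fin.sum_univ_castSucc]
      have h1 : (∑ i : Fin m, ν (c ⊓ f i.castSucc))
          = (∑ i : Fin m, ν ((c ⊓ a) ⊓ g i)) + ∑ i : Fin m, ν ((c ⊓ aᶜ) ⊓ g i) := by
        rw [← Finset.sum_add_distrib]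
        exact Finset.sum_congr rfl fun i _ => fa_split hν c (g i) a
      have h2 : ν (c ⊓ f (Fin.last m)) = ν (c ⊓ a) := by rw [ha]
      rw [h1, h2]
      have h3 : ((c ⊓ a) ⊓ (c ⊓ a)) = c ⊓ a := inf_idem _
      linarith [hs₁, hs₂]
    -- the two candidate subsets
    have meet1 : c ⊓ a ≠ ⊥ →
        c ⊓ (insert (Fin.last m) (s₁.map Fin.castSuccEmb)).inf f ≠ ⊥ := by
      intro hca
      have h4 : (insert (Fin.last m) (s₁.map Fin.castSuccEmb)).inf f
          = a ⊓ (s₁.map Fin.castSuccEmb).inf f := by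
        rw [Finset.inf_insert, ha]
      have h5 : (s₁.map Fin.castSuccEmb).inf f = s₁.inf g := by
        rw [Finset.inf_map]; rfl
      rw [h4, h5, ← inf_assoc]
      exact hm₁ hca
    have meet2 : c ⊓ aᶜ ≠ ⊥ → c ⊓ (s₂.map Fin.castSuccEmb).inf f ≠ ⊥ := by
      intro hca
      have h5 : (s₂.map Fin.castSuccEmb).inf f = s₂.inf g := by
        rw [Finset.inf_map]; rfl
      rw [h5]
      intro hcon
      apply hm₂ hca
      have : (c ⊓ aᶜ) ⊓ s₂.inf g ≤ c ⊓ s₂.inf g := by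
        exact inf_le_inf_right _ inf_le_left
      rw [hcon] at this
      exact le_bot_iff.1 this
    have card1 : (insert (Fin.last m) (s₁.map Fin.castSuccEmb)).card
        = s₁.card + 1 := by
      rw [Finset.card_insert_of_notMem, Finset.card_map]
      simp only [Finset.mem_map, Fin.castSuccEmb]
      rintro ⟨i, _, hi⟩
      exact (Fin.castSucc_lt_last i).ne hi
    by_cases hbot2 : c ⊓ aᶜ = ⊥
    · -- use s₁ ∪ {last}
      refine ⟨insert (Fin.last m) (s₁.map Fin.castSuccEmb), ?_, ?_⟩
      · intro hc
        apply meet1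
        intro h
        apply hc
        have := hνc
        have hceq : c = (c ⊓ a) ⊔ (c ⊓ aᶜ) := by
          rw [← inf_sup_left, sup_compl_eq_top, inf_top_eq]
        rw [hceq, h, hbot2, sup_idem]
      · have hz : ν (c ⊓ aᶜ) = 0 := by rw [hbot2]; exact hν.1
        rw [card1]
        push_cast
        nlinarith [hνc, hν.2.1 c]
    · by_cases hbot1 : c ⊓ a = ⊥
      · -- use s₂
        refine ⟨s₂.map Fin.castSuccEmb, fun hc => meet2 hbot2, ?_⟩
        have hz : ν (c ⊓ a) = 0 := by rw [hbot1]; exact hν.1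
        rw [Finset.card_map]
        nlinarith [hνc, Nat.cast_nonneg (α := ℝ) s₂.card]
      · by_cases hcard : s₂.card ≤ s₁.card + 1
        · refine ⟨insert (Fin.last m) (s₁.map Fin.castSuccEmb),
            fun _ => meet1 hbot1, ?_⟩
          rw [card1]
          push_cast
          have : (s₂.card : ℝ) ≤ s₁.card + 1 := by exact_mod_cast hcard
          nlinarith [hνc]
        · refine ⟨s₂.map Fin.castSuccEmb, fun _ => meet2 hbot2, ?_⟩
          rw [Finset.card_map]
          push_neg at hcard
          have : (s₁.card : ℝ) + 1 ≤ s₂.card := by exact_mod_cast hcard.le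
          nlinarith [hνc]

/-- The submodule of bounded functions on the Stone space. -/
def BddFn (α : Type*) [BooleanAlgebra α] : Submodule ℝ (US α → ℝ) where
  carrier := {g | ∃ C : ℝ, ∀ u, |g u| ≤ C}
  add_mem' := by
    rintro f g ⟨C, hC⟩ ⟨D, hD⟩
    exact ⟨C + D, fun u => (abs_add_le _ _).trans (add_le_add (hC u) (hD u))⟩
  zero_mem' := ⟨0, fun u => by simp⟩
  smul_mem' := by
    rintro c f ⟨C, hC⟩
    exact ⟨|c| * C, fun u => by
      rw [Pi.smul_apply, smul_eq_mul, abs_mul]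
      exact mul_le_mul_of_nonneg_left (hC u) (abs_nonneg c)⟩

/-- The element of `BddFn` given by an indicator. -/
noncomputable def xv (b : α) : BddFn α :=
  ⟨ind b, 1, fun u => abs_le.2 ⟨by linarith [ind_nonneg b u], ind_le_one b u⟩⟩

/-- The candidate function used in the sublinear functional. -/
noncomputable def cand (A : Set α) (F : Finset α) (w : α → ℝ) (x : BddFn α) :
    US α → ℝ :=
  fun u => x.1 u + ∑ a ∈ F, w a * (ind a u - interNum A)

/-- The set of candidate upper values. -/
def NS (A : Set α) (x : BddFn α) : Set ℝ :=
  {t | ∃ F : Finset α, ∃ w : α → ℝ, ↑F ⊆ A ∧ (∀ a, 0 ≤ w a) ∧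
    t = sSupR (cand A F w x)}

/-- The sublinear functional. -/
noncomputable def NN (A : Set α) (x : BddFn α) : ℝ := sInf (NS A x)

open Pointwise

section main
variable {A : Set α}

lemma bddfn_bound (x : BddFn α) : ∃ C : ℝ, ∀ u, |x.1 u| ≤ C := x.2

lemma cand_le {F : Finset α} {w : α → ℝ} (hw : ∀ a, 0 ≤ w a) {x : BddFn α}
    {C : ℝ} (hC : ∀ u, |x.1 u| ≤ C) (u : US α) :
    cand A F w x u ≤ C + ∑ a ∈ F, w a := by
  unfold cand
  have h1 : x.1 u ≤ C := (abs_le.1 (hC u)).2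
  have h2 : (∑ a ∈ F, w a * (ind a u - interNum A)) ≤ ∑ a ∈ F, w a := by
    refine Finset.sum_le_sum fun a _ => ?_
    have := ind_le_one a u
    have := interNum_nonneg A
    nlinarith [hw a]
  linarith

lemma NS_self_mem (x : BddFn α) : sSupR x.1 ∈ NS A x := by
  refine ⟨∅, fun _ => 0, by simp, fun _ => le_rfl, ?_⟩
  unfold cand; simp

lemma NS_lower (hne : Nonempty (US α)) (hF : ∀ a ∈ A, a ≠ (⊥ : α)) {x : BddFn α} {t : ℝ}
    (ht : t ∈ NS A x) {c : ℝ} (hc : ∀ u, c ≤ x.1 u) : c ≤ t := by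
  obtain ⟨F, w, hFA, hw, rfl⟩ := ht
  obtain ⟨C, hC⟩ := x.2
  refine le_of_forall_pos_le_add fun ε hε => ?_
  -- find u where the weighted sum term is > -ε
  have hkey := keyA hne F hFA w hw
  have hbd : ∀ v, (∑ a ∈ F, w a * ind a v) ≤ ∑ a ∈ F, w a := fun v =>
    Finset.sum_le_sum fun a _ => by
      have := ind_le_one a v; have := ind_nonneg a v; nlinarith [hw a]
  obtain ⟨u, hu⟩ := exists_near_sSupR hne hbd hε
  have h2 : interNum A * (∑ a ∈ F, w a) - ε < ∑ a ∈ F, w a * ind a u := by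
    linarith
  have h3 : -ε < ∑ a ∈ F, w a * (ind a u - interNum A) := by
    have : (∑ a ∈ F, w a * (ind a u - interNum A))
        = (∑ a ∈ F, w a * ind a u) - interNum A * (∑ a ∈ F, w a) := by
      rw [Finset.mul_sum, ← Finset.sum_sub_distrib]
      exact Finset.sum_congr rfl fun a _ => by ring
    rw [this]; linarith
  have h4 : c - ε < cand A F w x u := by
    have := hc u; unfold cand; linarith
  have h5 : cand A F w x u ≤ sSupR (cand A F w x) :=
    le_sSupR (cand_le hw hC) u
  linarith

lemma NS_bddBelow (hne : Nonempty (US α)) (hF : ∀ a ∈ A, a ≠ (⊥ : α)) (x : BddFn α) :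
    BddBelow (NS A x) := by
  obtain ⟨C, hC⟩ := x.2
  exact ⟨-C, fun t ht => NS_lower hne hF ht fun u => neg_le_of_abs_le (hC u)⟩

lemma NN_le (hne : Nonempty (US α)) (hF : ∀ a ∈ A, a ≠ (⊥ : α)) {x : BddFn α} {t : ℝ}
    (ht : t ∈ NS A x) : NN A x ≤ t :=
  csInf_le (NS_bddBelow hne hF x) ht

lemma NN_ge {x : BddFn α} {c : ℝ} (h : ∀ t ∈ NS A x, c ≤ t) : c ≤ NN A x :=
  le_csInf ⟨_, NS_self_mem x⟩ h

lemma NS_smul {c : ℝ} (hc : 0 < c) (x : BddFn α) :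
    NS A (c • x) = c • NS A x := by
  ext t
  simp only [Set.mem_smul_set]
  constructor
  · rintro ⟨F, w, hFA, hw, rfl⟩
    refine ⟨sSupR (cand A F (fun a => w a / c) x),
      ⟨F, fun a => w a / c, hFA, fun a => div_nonneg (hw a) hc.le, rfl⟩, ?_⟩
    have hkey : cand A F w (c • x) = fun u => c • cand A F (fun a => w a / c) x u := by
      funext u
      show c * x.1 u + _ = c • (x.1 u + _)
      rw [smul_eq_mul, mul_add, Finset.mul_sum]
      congr 1
      refine Finset.sum_congr rfl fun a _ => ?_
      field_simp
    rw [hkey]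
    unfold sSupR
    rw [← Set.smul_set_range, Real.sSup_smul_of_nonneg hc.le]
  · rintro ⟨t, ⟨F, w, hFA, hw, rfl⟩, rfl⟩
    refine ⟨F, fun a => c * w a, hFA, fun a => mul_nonneg hc.le (hw a), ?_⟩
    have hkey : cand A F (fun a => c * w a) (c • x) = fun u => c • cand A F w x u := by
      funext u
      show c * x.1 u + _ = c • (x.1 u + _)
      rw [smul_eq_mul, mul_add, Finset.mul_sum]
      congr 1
      exact Finset.sum_congr rfl fun a _ => by ring
    rw [hkey]
    unfold sSupR
    rw [← Set.smul_set_range, Real.sSup_smul_of_nonneg hc.le]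

lemma NN_smul {c : ℝ} (hc : 0 < c) (x : BddFn α) :
    NN A (c • x) = c * NN A x := by
  rw [NN, NN, NS_smul hc, Real.sInf_smul_of_nonneg hc.le, smul_eq_mul]

lemma NN_add (hne : Nonempty (US α)) (hF : ∀ a ∈ A, a ≠ (⊥ : α)) (x y : BddFn α) :
    NN A (x + y) ≤ NN A x + NN A y := by
  have step : ∀ t₁ ∈ NS A x, ∀ t₂ ∈ NS A y, NN A (x + y) ≤ t₁ + t₂ := by
    rintro _ ⟨F₁, w₁, hFA₁, hw₁, rfl⟩ _ ⟨F₂, w₂, hFA₂, hw₂, rfl⟩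
    set w₁' : α → ℝ := fun a => if a ∈ F₁ then w₁ a else 0 with hw₁'
    set w₂' : α → ℝ := fun a => if a ∈ F₂ then w₂ a else 0 with hw₂'
    have hptw : ∀ u, cand A (F₁ ∪ F₂) (fun a => w₁' a + w₂' a) (x + y) u
        = cand A F₁ w₁ x u + cand A F₂ w₂ y u := by
      intro u
      show x.1 u + y.1 u + _ = (x.1 u + _) + (y.1 u + _)
      have e1 : (∑ a ∈ F₁ ∪ F₂, (w₁' a + w₂' a) * (ind a u - interNum A))
          = (∑ a ∈ F₁ ∪ F₂, w₁' a * (ind a u - interNum A))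
            + ∑ a ∈ F₁ ∪ F₂, w₂' a * (ind a u - interNum A) := by
        rw [← Finset.sum_add_distrib]
        exact Finset.sum_congr rfl fun a _ => by ring
      have e2 : (∑ a ∈ F₁ ∪ F₂, w₁' a * (ind a u - interNum A))
          = ∑ a ∈ F₁, w₁ a * (ind a u - interNum A) := by
        rw [← Finset.sum_subset Finset.subset_union_left
          (fun a _ ha => by simp [hw₁', ha])]
        exact Finset.sum_congr rfl fun a ha => by simp [hw₁', ha]
      have e3 : (∑ a ∈ F₁ ∪ F₂, w₂' a * (ind a u - interNum A))
          = ∑ a ∈ F₂, w₂ a * (ind a u - interNum A) := by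
        rw [← Finset.sum_subset Finset.subset_union_right
          (fun a _ ha => by simp [hw₂', ha])]
        exact Finset.sum_congr rfl fun a ha => by simp [hw₂', ha]
      rw [e1, e2, e3]
      ring
    have hmem : sSupR (cand A (F₁ ∪ F₂) (fun a => w₁' a + w₂' a) (x + y))
        ∈ NS A (x + y) := by
      refine ⟨F₁ ∪ F₂, fun a => w₁' a + w₂' a, ?_, fun a => ?_, rfl⟩
      · intro a ha
        rcases Finset.mem_union.1 (by exact_mod_cast ha) with h | h
        · exact hFA₁ h
        · exact hFA₂ h
      · have g1 : (0:ℝ) ≤ w₁' a := by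
          by_cases h : a ∈ F₁ <;> simp [hw₁', h, hw₁ a]
        have g2 : (0:ℝ) ≤ w₂' a := by
          by_cases h : a ∈ F₂ <;> simp [hw₂', h, hw₂ a]
        simpa using add_nonneg g1 g2
    refine le_trans (NN_le hne hF hmem) ?_
    obtain ⟨C₁, hC₁⟩ := x.2
    obtain ⟨C₂, hC₂⟩ := y.2
    refine sSupR_le hne fun u => ?_
    rw [hptw u]
    exact add_le_add (le_sSupR (cand_le hw₁ hC₁) u) (le_sSupR (cand_le hw₂ hC₂) u)
  have h1 : ∀ t₁ ∈ NS A x, NN A (x + y) - t₁ ≤ NN A y := by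
    intro t₁ h₁
    refine le_csInf ⟨_, NS_self_mem y⟩ fun t₂ h₂ => ?_
    linarith [step t₁ h₁ t₂ h₂]
  have h2 : NN A (x + y) - NN A y ≤ NN A x := by
    refine le_csInf ⟨_, NS_self_mem x⟩ fun t₁ h₁ => ?_
    linarith [h1 t₁ h₁]
  linarith

end main

/-- Existence of a finitely additive probability measure with all values on `A`
at least the intersection number. -/
lemma exists_good_measure (hne : Nonempty (US α)) {A : Set α}
    (hF : ∀ a ∈ A, a ≠ (⊥ : α)) :
    ∃ ν : α → ℝ, IsFAProb ν ∧ ∀ a ∈ A, interNum A ≤ ν a := by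
  classical
  set one : BddFn α := xv (⊤ : α) with hone_def
  have hone : one ≠ 0 := by
    obtain ⟨u⟩ := hne
    intro h
    have h1 : (one : BddFn α).1 u = 0 := by rw [h]; rfl
    rw [hone_def] at h1
    have : ind (⊤ : α) u = 0 := h1
    rw [ind_top] at this
    norm_num at this
  set fpm : ↥(BddFn α) →ₗ.[ℝ] ℝ := LinearPMap.mkSpanSingleton one 1 hone with hfpm
  have hdom : fpm.domain = (ℝ ∙ one) := LinearPMap.domain_mkSpanSingleton _ _ _
  have hi0 : (0:ℝ) ≤ interNum A := interNum_nonneg A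
  -- `f x ≤ N x` on the domain
  have hf_le : ∀ z : fpm.domain, fpm z ≤ NN A z.1 := by
    rintro ⟨z, hz⟩
    obtain ⟨c, rfl⟩ := Submodule.mem_span_singleton.1 (hdom ▸ hz)
    have happ : fpm ⟨c • one, hz⟩ = c := by
      have h0 := LinearPMap.mkSpanSingleton'_apply one (1:ℝ) _ c hz
      rw [smul_eq_mul, mul_one] at h0
      exact h0
    rw [happ]
    show c ≤ NN A (c • one)
    -- NN A (c • one) ≥ c
    have lower : ∀ (d : ℝ) (v : BddFn α), (∀ u, d ≤ v.1 u) → d ≤ NN A v :=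
      fun d v hv => NN_ge fun t ht => NS_lower hne hF ht hv
    rcases lt_trichotomy c 0 with hc | hc | hc
    · have heq : c • one = (-c) • (-one) := by rw [smul_neg, ← neg_smul, neg_neg]
      rw [heq, NN_smul (show (0:ℝ) < -c by linarith)]
      have hm1 : (-1 : ℝ) ≤ NN A (-one) := by
        refine lower _ _ fun u => ?_
        have : (-one : BddFn α).1 u = -(ind (⊤:α) u) := rfl
        rw [this, ind_top]
      nlinarith
    · subst hc
      rw [zero_smul]
      refine lower 0 0 fun u => ?_
      rw [show ((0 : BddFn α)).1 u = 0 from rfl]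
    · rw [NN_smul hc]
      have hm1 : (1 : ℝ) ≤ NN A one := by
        refine lower _ _ fun u => ?_
        rw [show (one : BddFn α).1 u = ind (⊤:α) u from rfl, ind_top]
      nlinarith
  obtain ⟨g, hg_ext, hg_le⟩ := exists_extension_of_le_sublinear fpm (NN A)
    (fun c hc x => NN_smul hc x) (fun x y => NN_add hne hF x y) hf_le
  -- the measure
  refine ⟨fun b => g (xv b), ⟨⟨?_, ?_, ?_⟩, ?_⟩, ?_⟩
  · -- ν ⊥ = 0
    show g (xv ⊥) = 0
    have : xv (⊥ : α) = (0 : BddFn α) := by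
      apply Subtype.ext
      funext u
      rw [show (xv (⊥:α)).1 u = ind (⊥:α) u from rfl, ind_bot]
      rfl
    rw [this, map_zero]
  · -- nonneg
    intro b
    show 0 ≤ g (xv b)
    have h1 : g (-(xv b)) ≤ NN A (-(xv b)) := hg_le _
    have h2 : NN A (-(xv b)) ≤ 0 := by
      have hmem : sSupR (cand A ∅ (fun _ => 0) (-(xv b))) ∈ NS A (-(xv b)) :=
        ⟨∅, fun _ => 0, by simp, fun _ => le_rfl, rfl⟩
      refine le_trans (NN_le hne hF hmem) ?_
      refine sSupR_le hne fun u => ?_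
      have : cand A ∅ (fun _ => 0) (-(xv b)) u = -(ind b u) := by
        unfold cand
        simp
        rfl
      rw [this]
      simpa using ind_nonneg b u
    rw [map_neg] at h1
    linarith
  · -- additivity
    intro a b hab
    show g (xv (a ⊔ b)) = g (xv a) + g (xv b)
    have : xv (a ⊔ b) = xv a + xv b := by
      apply Subtype.ext
      funext u
      rw [show (xv (a ⊔ b)).1 u = ind (a ⊔ b) u from rfl, ind_add_disj hab]
      rfl
    rw [this, map_add]
  · -- ν ⊤ = 1
    show g (xv ⊤) = 1
    have hmem : one ∈ fpm.domain := by
      rw [hdom]; exact Submodule.mem_span_singleton_self one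
    have := hg_ext ⟨one, hmem⟩
    have happ : fpm ⟨one, hmem⟩ = 1 :=
      LinearPMap.mkSpanSingleton_apply ℝ ℝ hone 1
    rw [happ] at this
    exact this
  · -- ν a ≥ interNum A on A
    intro a ha
    show interNum A ≤ g (xv a)
    have h1 : g (-(xv a)) ≤ NN A (-(xv a)) := hg_le _
    have h2 : NN A (-(xv a)) ≤ -(interNum A) := by
      have hmem : sSupR (cand A {a} (fun x => if x = a then 1 else 0) (-(xv a)))
          ∈ NS A (-(xv a)) := by
        refine ⟨{a}, fun x => if x = a then 1 else 0, by simpa using ha,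
          fun x => ?_, rfl⟩
        by_cases h : x = a <;> simp [h]
      refine le_trans (NN_le hne hF hmem) ?_
      refine sSupR_le hne fun u => ?_
      have : cand A {a} (fun x => if x = a then 1 else 0) (-(xv a)) u
          = -(interNum A) := by
        unfold cand
        rw [Finset.sum_singleton]
        rw [show ((-(xv a) : BddFn α)).1 u = -(ind a u) from rfl]
        norm_num
        ring
      rw [this]
    rw [map_neg] at h1
    linarith

end KelleyAux

theorem stmt5 {α : Type*} [BooleanAlgebra α] (A : Set α)
    (hA : A.Nonempty) (hnz : ∀ a ∈ A, a ≠ (⊥ : α)) :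
    (∃ ν : α → ℝ, IsFAProb ν ∧ sInf (ν '' A) = interNum A) ∧
    (∀ ν : α → ℝ, IsFAProb ν → sInf (ν '' A) ≤ interNum A) := by
  classical
  obtain ⟨a₀, ha₀⟩ := hA
  have hnt : (⊤ : α) ≠ ⊥ := by
    intro h
    exact hnz a₀ ha₀ (le_bot_iff.1 (h ▸ le_top))
  have hne : Nonempty (US α) := us_nonempty hnt
  have easy : ∀ ν : α → ℝ, IsFAProb ν → sInf (ν '' A) ≤ interNum A := by
    intro ν hν
    set r := sInf (ν '' A) with hr
    have himg : (ν '' A).Nonempty := ⟨ν a₀, a₀, ha₀, rfl⟩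
    have hbdd : BddBelow (ν '' A) := ⟨0, by rintro _ ⟨a, _, rfl⟩; exact hν.1.2.1 a⟩
    have hr0 : 0 ≤ r := le_csInf himg (by rintro _ ⟨a, _, rfl⟩; exact hν.1.2.1 a)
    have hνle1 : ∀ a : α, ν a ≤ 1 := by
      intro a
      have hadd := hν.1.2.2 a aᶜ inf_compl_eq_bot
      rw [sup_compl_eq_top] at hadd
      have h2 := hν.1.2.1 aᶜ
      have h3 := hν.2
      linarith [h3 ▸ hadd]
    have hr1 : r ≤ 1 := le_trans (csInf_le hbdd ⟨a₀, ha₀, rfl⟩) (hνle1 a₀)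
    have hmem : r ∈ TS A := by
      refine ⟨hr0, hr1, fun m f hf => ?_⟩
      obtain ⟨s, hmeet, hsum⟩ := counting hν.1 m f ⊤
      refine ⟨s, ?_, fun _ => ?_⟩
      · have h1 : ∀ i, r ≤ ν (f i) := fun i => csInf_le hbdd ⟨f i, hf i, rfl⟩
        calc r * m = ∑ _i : Fin m, r := by
              rw [Finset.sum_const, Finset.card_univ, Fintype.card_fin,
                nsmul_eq_mul]
              ring
          _ ≤ ∑ i, ν (⊤ ⊓ f i) := Finset.sum_le_sum fun i _ => by
              rw [top_inf_eq]; exact h1 i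
          _ ≤ s.card * ν ⊤ := hsum
          _ = s.card := by rw [hν.2, mul_one]
      · have hm := hmeet hnt
        rwa [top_inf_eq] at hm
    rw [interNum_def]
    exact le_csSup (TS_bddAbove A) hmem
  refine ⟨?_, easy⟩
  obtain ⟨ν, hprob, hge⟩ := exists_good_measure hne hnz
  refine ⟨ν, hprob, ?_⟩
  refine le_antisymm (easy ν hprob) ?_
  exact le_csInf ⟨ν a₀, a₀, ha₀, rfl⟩ (by rintro _ ⟨a, ha, rfl⟩; exact hge a ha)
end

section
/- For any finitely additive probability measure ν on a Boolean algebra B and any nonempty A ⊆ B \ {0}, the intersection number of A is at least inf_{a ∈ A} ν(a). -/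
open scoped symmDiff

section Aux

variable {α : Type*} [BooleanAlgebra α] {ν : α → ℝ}

lemma aux_nu_mono (hν : IsFAMeasure ν) {a b : α} (h : a ≤ b) : ν a ≤ ν b := by
  have hb : b = a ⊔ b \ a := (sup_sdiff_cancel' le_rfl h).symm
  have hd : a ⊓ b \ a = ⊥ := inf_sdiff_self_right
  rw [hb, hν.2.2 _ _ hd]
  have := hν.2.1 (b \ a)
  linarith

lemma aux_nu_sum (hν : IsFAMeasure ν) {ι : Type*} [DecidableEq ι] (s : Finset ι) (c : ι → α)
    (hd : ∀ i ∈ s, ∀ j ∈ s, i ≠ j → c i ⊓ c j = ⊥) :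
    ν (s.sup c) = ∑ i ∈ s, ν (c i) := by
  induction s using Finset.induction with
  | empty => simpa using hν.1
  | @insert i s his ih =>
    rw [Finset.sup_insert, Finset.sum_insert his]
    have hdisj : c i ⊓ s.sup c = ⊥ := by
      rw [Finset.sup_inf_distrib_left]
      apply (Finset.sup_eq_bot_iff _ _).2
      intro j hj
      exact hd i (Finset.mem_insert_self i s) j (Finset.mem_insert_of_mem hj)
        (fun h => his (h ▸ hj))
    rw [hν.2.2 _ _ hdisj, ih (fun i hi j hj hij =>
      hd i (Finset.mem_insert_of_mem hi) j (Finset.mem_insert_of_mem hj) hij)]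

/-- the cell of a Boolean combination -/
noncomputable def cell {m : ℕ} (f : Fin m → α) (ε : Fin m → Bool) : α :=
  Finset.univ.inf (fun i => if ε i then f i else (f i)ᶜ)

lemma cell_le_of_true {m : ℕ} (f : Fin m → α) (ε : Fin m → Bool) {i : Fin m}
    (h : ε i = true) : cell f ε ≤ f i := by
  have := Finset.inf_le (f := fun i => if ε i then f i else (f i)ᶜ)
    (Finset.mem_univ i)
  simpa [h, cell] using this

lemma cell_le_of_false {m : ℕ} (f : Fin m → α) (ε : Fin m → Bool) {i : Fin m}
    (h : ε i = false) : cell f ε ≤ (f i)ᶜ := by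
  have := Finset.inf_le (f := fun i => if ε i then f i else (f i)ᶜ)
    (Finset.mem_univ i)
  simpa [h, cell] using this

lemma cell_disjoint {m : ℕ} (f : Fin m → α) {ε ε' : Fin m → Bool} (h : ε ≠ ε') :
    cell f ε ⊓ cell f ε' = ⊥ := by
  obtain ⟨i, hi⟩ : ∃ i, ε i ≠ ε' i := by
    by_contra hc
    push_neg at hc
    exact h (funext hc)
  cases hb : ε i <;> cases hb' : ε' i
  · exact absurd (hb.trans hb'.symm) hi
  · refine le_bot_iff.1 ?_
    calc cell f ε ⊓ cell f ε' ≤ (f i)ᶜ ⊓ f i :=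
          inf_le_inf (cell_le_of_false f ε hb) (cell_le_of_true f ε' hb')
      _ = ⊥ := by simp
  · refine le_bot_iff.1 ?_
    calc cell f ε ⊓ cell f ε' ≤ f i ⊓ (f i)ᶜ :=
          inf_le_inf (cell_le_of_true f ε hb) (cell_le_of_false f ε' hb')
      _ = ⊥ := by simp
  · exact absurd (hb.trans hb'.symm) hi

lemma cells_cover {m : ℕ} (f : Fin m → α) :
    (Finset.univ : Finset (Fin m → Bool)).sup (cell f) = ⊤ := by
  -- generalize over the finite set of coordinates
  suffices H : ∀ t : Finset (Fin m),
      (⊤ : α) ≤ (Finset.univ : Finset (Fin m → Bool)).sup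
        (fun ε => t.inf (fun i => if ε i then f i else (f i)ᶜ)) by
    exact top_le_iff.1 (H Finset.univ)
  intro t
  induction t using Finset.induction with
  | empty =>
    have : (Nonempty (Fin m → Bool)) := ⟨fun _ => true⟩
    obtain ⟨ε⟩ := this
    calc (⊤ : α) = Finset.inf ∅ (fun i => if ε i then f i else (f i)ᶜ) := by simp
      _ ≤ _ := Finset.le_sup
          (f := fun ε : Fin m → Bool => Finset.inf ∅ (fun i => if ε i then f i else (f i)ᶜ))
          (Finset.mem_univ ε)
  | @insert i t hit ih =>
    refine le_trans ih (Finset.sup_le fun ε _ => ?_)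
    set g : (Fin m → Bool) → Fin m → α := fun ε i => if ε i then f i else (f i)ᶜ with hg
    have key : ∀ b : Bool, (if b then f i else (f i)ᶜ) ⊓ t.inf (g ε)
        ≤ (Finset.univ : Finset (Fin m → Bool)).sup (fun ε => (insert i t).inf (g ε)) := by
      intro b
      have heq : (insert i t).inf (g (Function.update ε i b)) =
          (if b then f i else (f i)ᶜ) ⊓ t.inf (g ε) := by
        rw [Finset.inf_insert]
        congr 1
        · simp [hg, Function.update_self]
        · refine Finset.inf_congr rfl fun j hj => ?_
          have : j ≠ i := fun h => hit (h ▸ hj)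
          simp [hg, Function.update_of_ne this]
      calc (if b then f i else (f i)ᶜ) ⊓ t.inf (g ε)
          = (insert i t).inf (g (Function.update ε i b)) := heq.symm
        _ ≤ _ := Finset.le_sup (f := fun ε => (insert i t).inf (g ε))
            (Finset.mem_univ (Function.update ε i b))
    calc t.inf (g ε) = (f i ⊔ (f i)ᶜ) ⊓ t.inf (g ε) := by simp
      _ = (f i ⊓ t.inf (g ε)) ⊔ ((f i)ᶜ ⊓ t.inf (g ε)) := inf_sup_right _ _ _
      _ ≤ _ := sup_le (by simpa using key true) (by simpa using key false)

lemma nu_decomp (hν : IsFAMeasure ν) {m : ℕ} (f : Fin m → α) (a : α) :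
    ν a = ∑ ε : Fin m → Bool, ν (a ⊓ cell f ε) := by
  have h1 : a = (Finset.univ : Finset (Fin m → Bool)).sup (fun ε => a ⊓ cell f ε) := by
    rw [← Finset.sup_inf_distrib_left, cells_cover, inf_top_eq]
  calc ν a = ν ((Finset.univ : Finset (Fin m → Bool)).sup (fun ε => a ⊓ cell f ε)) := by
        rw [← h1]
    _ = ∑ ε : Fin m → Bool, ν (a ⊓ cell f ε) := by
        refine aux_nu_sum hν _ _ fun ε _ ε' _ hne => ?_
        refine le_bot_iff.1 ?_
        calc (a ⊓ cell f ε) ⊓ (a ⊓ cell f ε') ≤ cell f ε ⊓ cell f ε' :=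
              inf_le_inf inf_le_right inf_le_right
          _ = ⊥ := cell_disjoint f hne

end Aux

theorem stmt6 {α : Type*} [BooleanAlgebra α] (A : Set α)
    (hA : A.Nonempty) (hnz : ∀ a ∈ A, a ≠ (⊥ : α))
    (ν : α → ℝ) (hν : IsFAProb ν) :
    sInf (ν '' A) ≤ interNum A := by
  obtain ⟨hνm, hνtop⟩ := hν
  obtain ⟨hbot, hpos, hadd⟩ := hνm
  set r := sInf (ν '' A) with hr
  have hbdd : BddBelow (ν '' A) := ⟨0, fun x ⟨a, _, ha⟩ => ha ▸ hpos a⟩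
  have hAne : (ν '' A).Nonempty := hA.image ν
  have hr0 : 0 ≤ r := le_csInf hAne (fun x ⟨a, _, ha⟩ => ha ▸ hpos a)
  have hrle : ∀ a ∈ A, r ≤ ν a := fun a ha => csInf_le hbdd ⟨a, ha, rfl⟩
  have hν1 : ∀ a : α, ν a ≤ 1 := fun a => hνtop ▸ aux_nu_mono ⟨hbot, hpos, hadd⟩ le_top
  have hr1 : r ≤ 1 := by
    obtain ⟨a, ha⟩ := hA
    exact (hrle a ha).trans (hν1 a)
  -- r is in the defining set
  have hmem : r ∈ {r : ℝ | 0 ≤ r ∧ r ≤ 1 ∧ ∀ (m : ℕ) (f : Fin m → α), (∀ i, f i ∈ A) →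
      ∃ s : Finset (Fin m), r * (m : ℝ) ≤ (s.card : ℝ) ∧ (s.Nonempty → s.inf f ≠ ⊥)} := by
    refine ⟨hr0, hr1, fun m f hf => ?_⟩
    set c : (Fin m → Bool) → α := cell f with hc
    set k : (Fin m → Bool) → ℕ := fun ε => (Finset.univ.filter (fun i => ε i = true)).card
      with hk
    -- total measure of cells is 1
    have htotal : ∑ ε : Fin m → Bool, ν (c ε) = 1 := by
      have := nu_decomp ⟨hbot, hpos, hadd⟩ f (⊤ : α)
      simpa [hνtop, hc] using this.symm
    -- measure of each f i as sum over cells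
    have hfi : ∀ i : Fin m, ν (f i) = ∑ ε : Fin m → Bool,
        (if ε i = true then ν (c ε) else 0) := by
      intro i
      rw [nu_decomp ⟨hbot, hpos, hadd⟩ f (f i)]
      refine Finset.sum_congr rfl fun ε _ => ?_
      rcases Bool.eq_false_or_eq_true (ε i) with h1 | h1
      · have : f i ⊓ c ε = c ε := inf_eq_right.2 (cell_le_of_true f ε h1)
        simp [h1, ← hc, this]
      · have : f i ⊓ c ε = ⊥ := by
          refine le_bot_iff.1 ?_
          calc f i ⊓ c ε ≤ f i ⊓ (f i)ᶜ := inf_le_inf_left _ (cell_le_of_false f ε h1)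
            _ = ⊥ := by simp
        simp [h1, ← hc, this, hbot]
    -- the sum identity
    have hsum : ∑ i : Fin m, ν (f i) = ∑ ε : Fin m → Bool, (k ε : ℝ) * ν (c ε) := by
      calc ∑ i : Fin m, ν (f i)
          = ∑ i : Fin m, ∑ ε : Fin m → Bool, (if ε i = true then ν (c ε) else 0) := by
            exact Finset.sum_congr rfl fun i _ => hfi i
        _ = ∑ ε : Fin m → Bool, ∑ i : Fin m, (if ε i = true then ν (c ε) else 0) :=
            Finset.sum_comm
        _ = ∑ ε : Fin m → Bool, (k ε : ℝ) * ν (c ε) := by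
            refine Finset.sum_congr rfl fun ε _ => ?_
            rw [← Finset.sum_filter, Finset.sum_const, nsmul_eq_mul]
    -- lower bound on the sum
    have hlow : r * (m : ℝ) ≤ ∑ i : Fin m, ν (f i) := by
      calc r * (m : ℝ) = ∑ _i : Fin m, r := by
            rw [Finset.sum_const, Finset.card_univ, Fintype.card_fin, nsmul_eq_mul, mul_comm]
        _ ≤ ∑ i : Fin m, ν (f i) := Finset.sum_le_sum fun i _ => hrle (f i) (hf i)
    -- the support of the cell measure
    set S : Finset (Fin m → Bool) := Finset.univ.filter (fun ε => ν (c ε) ≠ 0) with hS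
    have hSne : S.Nonempty := by
      by_contra hempty
      rw [Finset.not_nonempty_iff_eq_empty] at hempty
      have : ∑ ε : Fin m → Bool, ν (c ε) = 0 := by
        refine Finset.sum_eq_zero fun ε _ => ?_
        by_contra hne
        have : ε ∈ S := Finset.mem_filter.2 ⟨Finset.mem_univ ε, hne⟩
        rw [hempty] at this
        exact absurd this (Finset.notMem_empty ε)
      rw [this] at htotal
      norm_num at htotal
    obtain ⟨ε₀, hε₀S, hε₀max⟩ := S.exists_max_image k hSne
    have hε₀ : ν (c ε₀) ≠ 0 := (Finset.mem_filter.1 hε₀S).2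
    -- upper bound on the sum
    have hup : ∑ ε : Fin m → Bool, (k ε : ℝ) * ν (c ε) ≤ (k ε₀ : ℝ) := by
      calc ∑ ε : Fin m → Bool, (k ε : ℝ) * ν (c ε)
          ≤ ∑ ε : Fin m → Bool, (k ε₀ : ℝ) * ν (c ε) := by
            refine Finset.sum_le_sum fun ε _ => ?_
            by_cases hε : ν (c ε) = 0
            · simp [hε]
            · have : ε ∈ S := Finset.mem_filter.2 ⟨Finset.mem_univ ε, hε⟩
              exact mul_le_mul_of_nonneg_right
                (Nat.cast_le.2 (hε₀max ε this)) (hpos _)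
        _ = (k ε₀ : ℝ) := by rw [← Finset.mul_sum, htotal, mul_one]
    refine ⟨Finset.univ.filter (fun i => ε₀ i = true), ?_, fun _ => ?_⟩
    · calc r * (m : ℝ) ≤ ∑ i : Fin m, ν (f i) := hlow
        _ = ∑ ε : Fin m → Bool, (k ε : ℝ) * ν (c ε) := hsum
        _ ≤ (k ε₀ : ℝ) := hup
    · intro hbotinf
      have hle : c ε₀ ≤ (Finset.univ.filter (fun i => ε₀ i = true)).inf f :=
        Finset.le_inf fun i hi => cell_le_of_true f ε₀ (Finset.mem_filter.1 hi).2
      rw [hbotinf, le_bot_iff] at hle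
      exact hε₀ (hle ▸ hbot)
  exact le_csSup ⟨1, fun x hx => hx.2.1⟩ hmem
end

section
/- If a family A of nonzero elements of a Boolean algebra has positive intersection number, then A has only finite antichains; consequently, a Boolean algebra satisfying Kelley's condition (B \ {0} is a countable union of families of positive intersection number) satisfies the countable chain condition. -/
open scoped symmDiff

lemma part1 {α : Type*} [BooleanAlgebra α] (A : Set α) (hA : ∀ a ∈ A, a ≠ (⊥ : α))
    (hpos : 0 < interNum A) (S : Set α) (hSA : S ⊆ A) (hS : S.PairwiseDisjoint id) :
    S.Finite := by
  -- get r > 0 in the set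
  have hne : {r : ℝ | 0 ≤ r ∧ r ≤ 1 ∧ ∀ (m : ℕ) (f : Fin m → α), (∀ i, f i ∈ A) →
      ∃ s : Finset (Fin m), r * (m : ℝ) ≤ (s.card : ℝ) ∧ (s.Nonempty → s.inf f ≠ ⊥)}.Nonempty := by
    refine ⟨0, le_refl 0, zero_le_one, fun m f _ => ⟨∅, by simp, by simp⟩⟩
  obtain ⟨r, hrmem, hr0⟩ := exists_lt_of_lt_csSup hne hpos
  obtain ⟨-, hr1, hP⟩ := hrmem
  obtain ⟨m, hm⟩ := exists_nat_gt (1 / r)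
  have hrm : 1 < r * m := by
    rw [div_lt_iff₀ hr0] at hm
    linarith [hm]
  by_contra hinf
  rw [← Set.not_infinite, not_not] at hinf
  obtain ⟨T, hTS, hTcard⟩ := hinf.exists_subset_card_eq m
  let e := (Finset.equivFinOfCardEq hTcard).symm
  have hfA : ∀ i : Fin m, ((e i : α)) ∈ A := fun i => hSA (hTS (e i).2)
  obtain ⟨s, h1, h2⟩ := hP m (fun i => (e i : α)) hfA
  have hcard : s.card ≤ 1 := by
    by_contra hc
    push_neg at hc
    obtain ⟨i, hi, j, hj, hij⟩ := Finset.one_lt_card.mp hc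
    have hne' : (e i : α) ≠ (e j : α) := by
      intro h
      exact hij (e.injective (Subtype.ext h))
    have hdisj : Disjoint ((e i : α)) ((e j : α)) :=
      hS (hTS (e i).2) (hTS (e j).2) hne'
    have hinf1 : s.inf (fun i => (e i : α)) ≤ (e i : α) := Finset.inf_le hi
    have hinf2 : s.inf (fun i => (e i : α)) ≤ (e j : α) := Finset.inf_le hj
    have : s.inf (fun i => (e i : α)) = ⊥ :=
      le_bot_iff.mp (le_inf hinf1 hinf2 |>.trans hdisj.le_bot)
    exact h2 ⟨i, hi⟩ this
  have : r * m ≤ 1 := h1.trans (by exact_mod_cast hcard)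
  linarith

theorem stmt7 {α : Type*} [BooleanAlgebra α] :
    (∀ A : Set α, (∀ a ∈ A, a ≠ (⊥ : α)) → 0 < interNum A →
      ∀ S : Set α, S ⊆ A → S.PairwiseDisjoint id → S.Finite) ∧
    (∀ B : ℕ → Set α, (∀ n : ℕ, ∀ a ∈ B n, a ≠ (⊥ : α)) →
      (∀ a : α, a ≠ ⊥ → ∃ n : ℕ, a ∈ B n) →
      (∀ n : ℕ, 0 < interNum (B n)) →
      ∀ S : Set α, (∀ a ∈ S, a ≠ (⊥ : α)) → S.PairwiseDisjoint id → S.Countable) := by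
  refine ⟨part1, fun B hB hcov hpos S hS0 hS => ?_⟩
  have hsub : S ⊆ ⋃ n, S ∩ B n := by
    intro a ha
    obtain ⟨n, hn⟩ := hcov a (hS0 a ha)
    exact Set.mem_iUnion.mpr ⟨n, ha, hn⟩
  refine Set.Countable.mono hsub (Set.countable_iUnion fun n => ?_)
  exact (part1 (B n) (hB n) (hpos n) (S ∩ B n) Set.inter_subset_right
    (hS.subset Set.inter_subset_left)).countable
end

section
/- If a Boolean algebra B carries a strictly positive separable finitely additive measure, then B is approximable: there exists a sequence (μ_n)_{n<ω} of finitely additive probability measures on B such that for every nonzero a ∈ B there is n with μ_n(a) > 1/2. -/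
open scoped symmDiff

private lemma mono_of_FA {α : Type*} [BooleanAlgebra α] {μ : α → ℝ}
    (hμ : IsFAMeasure μ) {a b : α} (h : a ≤ b) : μ a ≤ μ b := by
  have hd : a ⊓ (b \ a) = ⊥ := by rw [inf_sdiff_self_right]
  have := hμ.2.2 a (b \ a) hd
  rw [sup_sdiff_cancel' le_rfl h] at this
  have := hμ.2.1 (b \ a)
  linarith

theorem stmt10 {α : Type*} [BooleanAlgebra α] (μ : α → ℝ)
    (hμ : IsFAProb μ) (hsp : StrictlyPositive μ)
    (hsep : ∃ D : Set α, D.Countable ∧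
      ∀ a : α, ∀ ε : ℝ, 0 < ε → ∃ d ∈ D, μ (a ∆ d) < ε) :
    ∃ μs : ℕ → α → ℝ, (∀ n, IsFAProb (μs n)) ∧
      ∀ a : α, a ≠ ⊥ → ∃ n : ℕ, 1 / 2 < μs n a := by
  obtain ⟨D, hDc, hDd⟩ := hsep
  obtain ⟨hμm, hμt⟩ := hμ
  obtain ⟨d0, hd0, -⟩ := hDd ⊤ 1 one_pos
  have hne : D.Nonempty := ⟨d0, hd0⟩
  obtain ⟨f, hf⟩ := Set.Countable.exists_eq_range hDc hne
  have hsplit : ∀ x y : α, μ x = μ (x ⊓ y) + μ (x \ y) := by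
    intro x y
    have hd : (x ⊓ y) ⊓ (x \ y) = ⊥ :=
      (disjoint_sdiff_self_right.mono_left inf_le_right).eq_bot
    have := hμm.2.2 (x ⊓ y) (x \ y) hd
    rwa [sup_inf_sdiff] at this
  refine ⟨fun n a => if 0 < μ (f n) then μ (a ⊓ f n) / μ (f n) else μ a, ?_, ?_⟩
  · intro n
    by_cases h : 0 < μ (f n)
    · simp only [h, if_true]
      refine ⟨⟨by simp [hμm.1], fun a => div_nonneg (hμm.2.1 (a ⊓ f n)) h.le, ?_⟩, by
        show μ (⊤ ⊓ f n) / μ (f n) = 1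
        rw [top_inf_eq, div_self h.ne']⟩
      intro a b hab
      have hd : (a ⊓ f n) ⊓ (b ⊓ f n) = ⊥ :=
        le_bot_iff.1 (le_trans (inf_le_inf inf_le_left inf_le_left) hab.le)
      have := hμm.2.2 (a ⊓ f n) (b ⊓ f n) hd
      rw [← inf_sup_right] at this
      show μ ((a ⊔ b) ⊓ f n) / μ (f n) = μ (a ⊓ f n) / μ (f n) + μ (b ⊓ f n) / μ (f n)
      rw [this, add_div]
    · simp only [h, if_false]
      exact ⟨hμm, hμt⟩
  · intro a ha
    have hpos : 0 < μ a := hsp a ha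
    obtain ⟨d, hdD, hdε⟩ := hDd a (μ a / 3) (by linarith)
    have hd_sub : μ (a \ d) ≤ μ (a ∆ d) :=
      mono_of_FA hμm (by rw [symmDiff_def]; exact le_sup_left)
    have hd_sub' : μ (d \ a) ≤ μ (a ∆ d) :=
      mono_of_FA hμm (by rw [symmDiff_def]; exact le_sup_right)
    have h1 : μ a = μ (a ⊓ d) + μ (a \ d) := hsplit a d
    have h2 : μ d = μ (d ⊓ a) + μ (d \ a) := hsplit d a
    rw [inf_comm d a] at h2
    have hnn : 0 ≤ μ (d \ a) := hμm.2.1 (d \ a)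
    have hdpos : 0 < μ d := by linarith
    obtain ⟨n, hn⟩ : ∃ n, f n = d := by have : d ∈ Set.range f := hf ▸ hdD; exact this
    refine ⟨n, ?_⟩
    show (1:ℝ) / 2 < if 0 < μ (f n) then μ (a ⊓ f n) / μ (f n) else μ a
    rw [hn]
    simp only [hdpos, if_true]
    rw [lt_div_iff₀ hdpos]
    linarith
end

section
/- (Mägerl–Namioka, easy direction) If a Boolean algebra B is approximable, then for every ε > 0 there is a decomposition B \ {0} = ⋃_{n<ω} B_n^ε with int(B_n^ε) ≥ 1 − ε for each n. -/
open scoped symmDiff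

namespace MN11

variable {α : Type*} [BooleanAlgebra α]

theorem faMono {μ : α → ℝ} (hμ : IsFAMeasure μ) {a b : α} (hab : a ≤ b) : μ a ≤ μ b := by
  have hadd := hμ.2.2 a (b \ a) inf_sdiff_self_right
  have hs : a ⊔ b \ a = b := sup_sdiff_cancel' le_rfl hab
  have hnn := hμ.2.1 (b \ a)
  calc μ a ≤ μ a + μ (b \ a) := by linarith
    _ = μ (a ⊔ b \ a) := hadd.symm
    _ = μ b := by rw [hs]

theorem faLeOne {μ : α → ℝ} (hμ : IsFAProb μ) (a : α) : μ a ≤ 1 := by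
  have := faMono hμ.1 (le_top (a := a))
  rwa [hμ.2] at this

theorem faCount {μ : α → ℝ} (hμ : IsFAMeasure μ) :
    ∀ (m : ℕ) (f : Fin m → α) (c : α),
      ∃ S : Finset (Fin m), (∑ i, μ (f i ⊓ c)) ≤ (S.card : ℝ) * μ c ∧
        (S.inf f ⊓ c ≠ ⊥ ∨ S = ∅) := by
  intro m
  induction m with
  | zero =>
    intro f c
    exact ⟨∅, by simp, Or.inr rfl⟩
  | succ m ih =>
    intro f c
    set d := f (Fin.last m) with hd
    obtain ⟨S₁, hb₁, hc₁⟩ := ih (fun i => f i.castSucc) (c ⊓ d)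
    obtain ⟨S₂, hb₂, hc₂⟩ := ih (fun i => f i.castSucc) (c \ d)
    have hsplit : ∀ x : α, μ (x ⊓ c) = μ (x ⊓ (c ⊓ d)) + μ (x ⊓ (c \ d)) := by
      intro x
      have h1 : x ⊓ c = (x ⊓ (c ⊓ d)) ⊔ (x ⊓ (c \ d)) := by
        rw [← inf_sup_left, sup_inf_sdiff]
      have h2 : (x ⊓ (c ⊓ d)) ⊓ (x ⊓ (c \ d)) = ⊥ := by
        apply le_bot_iff.mp
        calc (x ⊓ (c ⊓ d)) ⊓ (x ⊓ (c \ d)) ≤ (c ⊓ d) ⊓ (c \ d) :=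
              inf_le_inf inf_le_right inf_le_right
          _ = ⊥ := inf_inf_sdiff c d
      rw [h1, hμ.2.2 _ _ h2]
    have hmueq : μ c = μ (c ⊓ d) + μ (c \ d) := by
      have := hμ.2.2 (c ⊓ d) (c \ d) (inf_inf_sdiff c d)
      rw [sup_inf_sdiff] at this
      exact this
    have hsum : (∑ i : Fin (m+1), μ (f i ⊓ c)) =
        (∑ i : Fin m, μ (f i.castSucc ⊓ (c ⊓ d))) +
        (∑ i : Fin m, μ (f i.castSucc ⊓ (c \ d))) + μ (c ⊓ d) := by
      rw [Fin.sum_univ_castSucc]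
      have : ∀ i : Fin m, μ (f i.castSucc ⊓ c)
          = μ (f i.castSucc ⊓ (c ⊓ d)) + μ (f i.castSucc ⊓ (c \ d)) := fun i => hsplit _
      rw [Finset.sum_congr rfl (fun i _ => this i), Finset.sum_add_distrib]
      have hlast : f (Fin.last m) ⊓ c = c ⊓ d := by rw [← hd, inf_comm]
      rw [hlast]
    have hA := hμ.2.1 (c ⊓ d)
    have hB := hμ.2.1 (c \ d)
    by_cases hbot : c ⊓ d = ⊥
    · -- case A
      refine ⟨S₂.map Fin.castSuccEmb, ?_, ?_⟩
      · have hz : ∀ i : Fin m, μ (f i.castSucc ⊓ (c ⊓ d)) = 0 := by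
          intro i; rw [hbot, inf_bot_eq, hμ.1]
        have : (∑ i : Fin m, μ (f i.castSucc ⊓ (c ⊓ d))) = 0 := by
          simp [hz]
        rw [hsum, this, hbot, hμ.1, Finset.card_map]
        have hc2c : μ (c \ d) ≤ μ c := faMono hμ sdiff_le
        have : (S₂.card : ℝ) * μ (c \ d) ≤ (S₂.card : ℝ) * μ c :=
          mul_le_mul_of_nonneg_left hc2c (by positivity)
        linarith
      · rcases hc₂ with h | h
        · left
          rw [Finset.inf_map]
          intro hcon
          apply h
          apply le_bot_iff.mp
          calc S₂.inf ((fun i => f i.castSucc)) ⊓ (c \ d)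
              ≤ S₂.inf (f ∘ Fin.castSuccEmb) ⊓ c := inf_le_inf (by rfl) sdiff_le
            _ = ⊥ := hcon
        · right; rw [h]; rfl
    · -- case B : c ⊓ d ≠ ⊥
      have hinf1 : (insert (Fin.last m) (S₁.map Fin.castSuccEmb)).inf f ⊓ c
          = S₁.inf (f ∘ Fin.castSuccEmb) ⊓ (c ⊓ d) := by
        classical
        rw [Finset.inf_insert, Finset.inf_map, ← hd]
        rw [inf_assoc, inf_comm c d, ← inf_assoc, inf_comm d _, inf_assoc]
      have hcond1 : S₁.inf (f ∘ Fin.castSuccEmb) ⊓ (c ⊓ d) ≠ ⊥ := by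
        rcases hc₁ with h | h
        · exact h
        · rw [h, Finset.inf_empty, top_inf_eq]; exact hbot
      by_cases hsz : (S₂.card : ℝ) ≤ (S₁.card : ℝ) + 1
      · classical
        refine ⟨insert (Fin.last m) (S₁.map Fin.castSuccEmb), ?_, Or.inl ?_⟩
        · have hninm : Fin.last m ∉ S₁.map Fin.castSuccEmb := by
            simp only [Finset.mem_map]
            rintro ⟨i, _, hi⟩
            exact absurd hi (Fin.castSucc_lt_last i).ne
          rw [Finset.card_insert_of_notMem hninm, Finset.card_map]
          push_cast
          have h2 : (S₂.card : ℝ) * μ (c \ d) ≤ ((S₁.card : ℝ) + 1) * μ (c \ d) :=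
            mul_le_mul_of_nonneg_right hsz hB
          rw [hsum, hmueq]
          nlinarith [hb₁, hb₂]
        · rw [hinf1]; exact hcond1
      · push_neg at hsz
        refine ⟨S₂.map Fin.castSuccEmb, ?_, Or.inl ?_⟩
        · rw [Finset.card_map, hsum, hmueq]
          have h1 : (∑ i : Fin m, μ (f i.castSucc ⊓ (c ⊓ d))) + μ (c ⊓ d)
              ≤ ((S₁.card : ℝ) + 1) * μ (c ⊓ d) := by nlinarith [hb₁]
          have h2 : ((S₁.card : ℝ) + 1) * μ (c ⊓ d) ≤ (S₂.card : ℝ) * μ (c ⊓ d) :=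
            mul_le_mul_of_nonneg_right hsz.le hA
          nlinarith [hb₂]
        · have hS₂ne : S₂ ≠ ∅ := by
            intro h
            rw [h] at hsz; simp at hsz
            nlinarith [hsz]
          rcases hc₂ with h | h
          · rw [Finset.inf_map]
            intro hcon
            apply h
            apply le_bot_iff.mp
            calc S₂.inf ((fun i => f i.castSucc)) ⊓ (c \ d)
                ≤ S₂.inf (f ∘ Fin.castSuccEmb) ⊓ c := inf_le_inf (by rfl) sdiff_le
              _ = ⊥ := hcon
          · exact absurd h hS₂ne

theorem interNum_bddAbove (A : Set α) :
    BddAbove {r : ℝ | 0 ≤ r ∧ r ≤ 1 ∧ ∀ (m : ℕ) (f : Fin m → α), (∀ i, f i ∈ A) →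
      ∃ s : Finset (Fin m), r * (m : ℝ) ≤ (s.card : ℝ) ∧ (s.Nonempty → s.inf f ≠ ⊥)} :=
  ⟨1, fun r hr => hr.2.1⟩

theorem le_interNum {A : Set α} {r : ℝ} (h0 : 0 ≤ r) (h1 : r ≤ 1)
    (h : ∀ (m : ℕ) (f : Fin m → α), (∀ i, f i ∈ A) →
      ∃ s : Finset (Fin m), r * (m : ℝ) ≤ (s.card : ℝ) ∧ (s.Nonempty → s.inf f ≠ ⊥)) :
    r ≤ interNum A :=
  le_csSup (interNum_bddAbove A) ⟨h0, h1, h⟩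

theorem interNum_nonneg (A : Set α) : 0 ≤ interNum A := by
  apply le_interNum le_rfl zero_le_one
  intro m f _
  exact ⟨∅, by simp, by simp⟩

/-- The key conditional classes have intersection number at least `1 - ε`. -/
theorem class_le_interNum {ε : ℝ} (hε0 : 0 < ε) (hε1 : ε < 1)
    {μ : α → ℝ} (hμ : IsFAMeasure μ) (d : α) :
    1 - ε ≤ interNum {a : α | a ≠ ⊥ ∧ 0 < μ d ∧ (1 - ε) * μ d ≤ μ (a ⊓ d)} := by
  apply le_interNum (by linarith) (by linarith)
  intro m f hf
  rcases Nat.eq_zero_or_pos m with hm | hm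
  · subst hm
    exact ⟨∅, by simp, by simp⟩
  · obtain ⟨-, hdpos, -⟩ := hf ⟨0, hm⟩
    obtain ⟨S, hS, hSc⟩ := faCount hμ m f d
    have hsum : (1 - ε) * (m : ℝ) * μ d ≤ ∑ i, μ (f i ⊓ d) := by
      have : ∀ i ∈ Finset.univ, (1 - ε) * μ d ≤ μ (f i ⊓ d) := fun i _ => (hf i).2.2
      calc (1 - ε) * (m : ℝ) * μ d = ∑ _i : Fin m, (1 - ε) * μ d := by
            rw [Finset.sum_const, Finset.card_univ, Fintype.card_fin]
            push_cast; ring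
        _ ≤ ∑ i, μ (f i ⊓ d) := Finset.sum_le_sum this
    have hcard : (1 - ε) * (m : ℝ) ≤ (S.card : ℝ) := by
      have h := le_trans hsum hS
      exact le_of_mul_le_mul_right (by linarith [h]) hdpos
    have hSne : S ≠ ∅ := by
      intro h
      rw [h] at hcard
      simp only [Finset.card_empty, Nat.cast_zero] at hcard
      have : (0:ℝ) < (1 - ε) * (m : ℝ) := by
        apply mul_pos (by linarith)
        exact_mod_cast hm
      linarith
    have hinf : S.inf f ≠ ⊥ := by
      rcases hSc with h | h
      · intro hb; rw [hb, bot_inf_eq] at h; exact h rfl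
      · exact absurd h hSne
    exact ⟨S, hcard, fun _ => hinf⟩

open Classical in
/-- All finite meets of a list of elements. -/
noncomputable def listInf (l : List α) : α := l.foldr (· ⊓ ·) ⊤

@[simp] theorem listInf_nil : listInf ([] : List α) = ⊤ := rfl

@[simp] theorem listInf_cons (x : α) (l : List α) :
    listInf (x :: l) = x ⊓ listInf l := rfl

theorem exists_list_codes {e : ℕ → α} :
    ∀ (xs : List α), (∀ v ∈ xs, v ∈ Set.range e) → ∃ L : List ℕ, L.map e = xs := by
  intro xs
  induction xs with
  | nil => exact fun _ => ⟨[], rfl⟩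
  | cons v vs ih =>
    intro h
    obtain ⟨n, hn⟩ := h v List.mem_cons_self
    obtain ⟨L, hL⟩ := ih (fun u hu => h u (List.mem_cons_of_mem _ hu))
    exact ⟨n :: L, by simp [hn, hL]⟩

open Classical in
/-- An enumeration of all finite meets of members of a set (sensible when the set is
countable and nonempty). -/
noncomputable def famOf (S : Set α) : ℕ → α :=
  if hS : S.Countable ∧ S.Nonempty then
    fun k => listInf (((Denumerable.eqv (List ℕ)).symm k).map
      (hS.1.exists_eq_range hS.2).choose)
  else fun _ => ⊤

theorem famOf_spec {S : Set α} (hc : S.Countable) (hn : S.Nonempty)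
    (xs : List α) (hxs : ∀ v ∈ xs, v ∈ S) : ∃ k, famOf S k = listInf xs := by
  have hcn : S.Countable ∧ S.Nonempty := ⟨hc, hn⟩
  have hrange : S = Set.range (hcn.1.exists_eq_range hcn.2).choose :=
    (hcn.1.exists_eq_range hcn.2).choose_spec
  obtain ⟨L, hL⟩ := exists_list_codes (e := (hcn.1.exists_eq_range hcn.2).choose) xs
    (fun v hv => by rw [← hrange]; exact hxs v hv)
  refine ⟨Denumerable.eqv (List ℕ) L, ?_⟩
  simp only [famOf, dif_pos hcn, Equiv.symm_apply_apply]
  rw [hL]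

/-- The well-ordering relation on `ℝ` (an arbitrary uncountable index type). -/
abbrev rR : ℝ → ℝ → Prop := WellOrderingRel

theorem rR_wf : WellFounded rR := IsWellFounded.wf

/-- The set of indices with countably many predecessors (a copy of `ω₁`). -/
def Tone : Set ℝ := {x | {y | rR y x}.Countable}

theorem Tone_not_countable : ¬ (Tone).Countable := by
  intro hc
  by_cases hne : (Toneᶜ).Nonempty
  · have hzc : rR_wf.min (Toneᶜ) hne ∈ Toneᶜ := rR_wf.min_mem _ hne
    apply hzc
    have hsub : {y | rR y (rR_wf.min (Toneᶜ) hne)} ⊆ Tone := by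
      intro u hu
      by_contra hun
      exact rR_wf.not_lt_min (Toneᶜ) hun hu
    exact hc.mono hsub
  · rw [Set.not_nonempty_iff_eq_empty, Set.compl_empty_iff] at hne
    exact Cardinal.not_countable_real (hne ▸ hc)

theorem Tone_lower {x y : ℝ} (hx : x ∈ Tone) (h : rR y x) : y ∈ Tone := by
  apply hx.mono
  intro u hu
  exact _root_.trans (r := rR) hu h

noncomputable def gfun (F : (ℕ → α) → α) : ℝ → α :=
  rR_wf.fix fun x ih =>
    F (famOf (insert ⊤ {v : α | ∃ (y : ℝ) (h : rR y x), ih y h = v}))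

theorem gfun_eq (F : (ℕ → α) → α) (x : ℝ) :
    gfun F x = F (famOf (insert ⊤ {v : α | ∃ (y : ℝ) (_ : rR y x), gfun F y = v})) := by
  show rR_wf.fix _ x = _
  rw [WellFounded.fix_eq]
  rfl

/-- Meet of the values of `g` along a list of indices. -/
noncomputable def mlgOf (g : ℝ → α) (l : List ℝ) : α := listInf (l.map g)

@[simp] theorem mlgOf_nil (g : ℝ → α) : mlgOf g [] = ⊤ := rfl

@[simp] theorem mlgOf_cons (g : ℝ → α) (x : ℝ) (l : List ℝ) :
    mlgOf g (x :: l) = g x ⊓ mlgOf g l := rfl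

/-- A (reverse-)descending chain of indices ending at `x`, all whose meets are nonzero. -/
def Chainy (g : ℝ → α) (x : ℝ) (l : List ℝ) : Prop :=
  l.head? = some x ∧ l.Pairwise (fun a b => rR b a) ∧ (∀ u ∈ l, u ∈ Tone) ∧ mlgOf g l ≠ ⊥

theorem chainy_single (g : ℝ → α) {x : ℝ} (hx : x ∈ Tone) (hgx : g x ≠ ⊥) :
    Chainy g x [x] := by
  refine ⟨rfl, List.pairwise_singleton _ _, by simpa using hx, ?_⟩
  simpa [mlgOf, listInf] using hgx

theorem chainy_dest {g : ℝ → α} {x : ℝ} {l : List ℝ} (h : Chainy g x l) :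
    ∃ rest, l = x :: rest := by
  rcases l with _ | ⟨a, rest⟩
  · exact absurd h.1 (by simp)
  · have := h.1
    simp only [List.head?_cons, Option.some.injEq] at this
    exact ⟨rest, by rw [this]⟩

theorem chainy_mem_le {g : ℝ → α} {x : ℝ} {l : List ℝ} (h : Chainy g x l) :
    ∀ u ∈ l, u = x ∨ rR u x := by
  obtain ⟨rest, rfl⟩ := chainy_dest h
  intro u hu
  rcases List.mem_cons.mp hu with rfl | hu
  · exact Or.inl rfl
  · exact Or.inr ((List.pairwise_cons.mp h.2.1).1 u hu)

theorem gfun_unserved (μs : ℕ → α → ℝ) (ε : ℝ) (F : (ℕ → α) → α)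
    (hF1 : ∀ f, F f ≠ ⊥)
    (hF2 : ∀ f : ℕ → α, ∀ j n, 0 < μs n (f j) →
      μs n (F f ⊓ f j) < (1 - ε) * μs n (f j))
    {x : ℝ} (hx : x ∈ Tone) :
    gfun F x ≠ ⊥ ∧ ∀ l : List ℝ, (∀ u ∈ l, rR u x) → ∀ n,
      0 < μs n (mlgOf (gfun F) l) →
      μs n (gfun F x ⊓ mlgOf (gfun F) l) < (1 - ε) * μs n (mlgOf (gfun F) l) := by
  have hset : {v : α | ∃ (y : ℝ) (_ : rR y x), gfun F y = v} = (gfun F) '' {y | rR y x} := by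
    ext v
    simp [Set.mem_image]
  have hScnt : (insert ⊤ {v : α | ∃ (y : ℝ) (_ : rR y x), gfun F y = v} : Set α).Countable := by
    rw [hset]
    exact (Set.Countable.image hx (gfun F)).insert ⊤
  have hSne : (insert ⊤ {v : α | ∃ (y : ℝ) (_ : rR y x), gfun F y = v} : Set α).Nonempty :=
    Set.insert_nonempty _ _
  have hgeq : gfun F x = F (famOf (insert ⊤ {v : α | ∃ (y : ℝ) (_ : rR y x), gfun F y = v})) :=
    gfun_eq F x
  constructor
  · rw [hgeq]; exact hF1 _
  · intro l hl n hpos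
    have hxs : ∀ v ∈ l.map (gfun F),
        v ∈ (insert ⊤ {v : α | ∃ (y : ℝ) (_ : rR y x), gfun F y = v} : Set α) := by
      intro v hv
      rw [List.mem_map] at hv
      obtain ⟨u, hu, rfl⟩ := hv
      exact Set.mem_insert_iff.mpr (Or.inr ⟨u, hl u hu, rfl⟩)
    obtain ⟨j, hj⟩ := famOf_spec hScnt hSne (l.map (gfun F)) hxs
    have hmlg : famOf (insert ⊤ {v : α | ∃ (y : ℝ) (_ : rR y x), gfun F y = v}) j
        = mlgOf (gfun F) l := hj
    have := hF2 (famOf (insert ⊤ {v : α | ∃ (y : ℝ) (_ : rR y x), gfun F y = v})) j n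
      (by rw [hmlg]; exact hpos)
    rw [hmlg, ← hgeq] at this
    exact this

theorem neg_false (μs : ℕ → α → ℝ) (ε : ℝ) (hprob : ∀ n, IsFAProb (μs n))
    (happrox : ∀ a : α, a ≠ ⊥ → ∃ n : ℕ, 1 / 2 < μs n a)
    (hε0 : 0 < ε) (hε1 : ε < 1)
    (g : ℝ → α)
    (hg : ∀ x ∈ Tone, g x ≠ ⊥ ∧ ∀ l : List ℝ, (∀ u ∈ l, rR u x) → ∀ n,
      0 < μs n (mlgOf g l) →
      μs n (g x ⊓ mlgOf g l) < (1 - ε) * μs n (mlgOf g l)) : False := by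
  classical
  obtain ⟨K, hK⟩ : ∃ k : ℕ, (1 - ε) ^ k < 1 / 2 :=
    exists_pow_lt_of_lt_one (by norm_num) (by linarith)
  -- the decay bound along descending chains
  have decBound : ∀ l : List ℝ, l ≠ [] → l.Pairwise (fun a b => rR b a) →
      (∀ u ∈ l, u ∈ Tone) → ∀ n, 0 < μs n (mlgOf g l) →
      μs n (mlgOf g l) ≤ (1 - ε) ^ (l.length - 1) := by
    intro l
    induction l with
    | nil => intro h; exact absurd rfl h
    | cons t rest ih =>
      intro _ hpw hmem n hpos
      rcases eq_or_ne rest [] with hr | hr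
      · subst hr
        have h10 : (([t] : List ℝ)).length - 1 = 0 := rfl
        rw [h10, pow_zero]
        exact faLeOne (hprob n) _
      · have hpwc := List.pairwise_cons.mp hpw
        have hmemrest : ∀ u ∈ rest, u ∈ Tone := fun u hu => hmem u (List.mem_cons_of_mem _ hu)
        have hle : mlgOf g (t :: rest) ≤ mlgOf g rest := by
          rw [mlgOf_cons]; exact inf_le_right
        have hposrest : 0 < μs n (mlgOf g rest) :=
          lt_of_lt_of_le hpos (faMono (hprob n).1 hle)
        have hserv := (hg t (hmem t List.mem_cons_self)).2 rest hpwc.1 n hposrest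
        have hIH := ih hr hpwc.2 hmemrest n hposrest
        have hrl : rest.length - 1 + 1 = rest.length :=
          Nat.succ_pred_eq_of_pos (List.length_pos_iff.mpr hr)
        have hlen : (t :: rest).length - 1 = rest.length := by simp
        rw [hlen, mlgOf_cons]
        calc μs n (g t ⊓ mlgOf g rest) ≤ (1 - ε) * μs n (mlgOf g rest) := hserv.le
          _ ≤ (1 - ε) * (1 - ε) ^ (rest.length - 1) :=
              mul_le_mul_of_nonneg_left hIH (by linarith)
          _ = (1 - ε) ^ (rest.length - 1 + 1) := (pow_succ' _ _).symm
          _ = (1 - ε) ^ rest.length := by rw [hrl]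
  -- chains are short
  have lenBound : ∀ (x : ℝ) (l : List ℝ), Chainy g x l → l.length ≤ K := by
    intro x l hl
    obtain ⟨rest, rfl⟩ := chainy_dest hl
    have hmlg := hl.2.2.2
    obtain ⟨n₀, hn₀⟩ := happrox _ hmlg
    have hb := decBound (x :: rest) (List.cons_ne_nil _ _) hl.2.1 hl.2.2.1 n₀ (by linarith)
    by_contra hlen
    push_neg at hlen
    have h1 : K ≤ (x :: rest).length - 1 := by omega
    have h2 : (1 - ε) ^ ((x :: rest).length - 1) ≤ (1 - ε) ^ K :=
      pow_le_pow_of_le_one (by linarith) (by linarith) h1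
    linarith
  -- ranks
  have hlenSet_bdd : ∀ x : ℝ, BddAbove {k | ∃ l, Chainy g x l ∧ l.length = k} := by
    intro x
    refine ⟨K, ?_⟩
    rintro k ⟨l, hl, rfl⟩
    exact lenBound x l hl
  set R : ℝ → ℕ := fun x => sSup {k | ∃ l, Chainy g x l ∧ l.length = k} with hRdef
  have hmemR : ∀ x ∈ Tone, ∃ l, Chainy g x l ∧ l.length = R x := by
    intro x hx
    have h1 : (1:ℕ) ∈ {k | ∃ l, Chainy g x l ∧ l.length = k} :=
      ⟨[x], chainy_single g hx (hg x hx).1, rfl⟩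
    exact Nat.sSup_mem ⟨1, h1⟩ (hlenSet_bdd x)
  have hRub : ∀ (x : ℝ) (k : ℕ), (∃ l, Chainy g x l ∧ l.length = k) → k ≤ R x := by
    intro x k hk
    exact le_csSup (hlenSet_bdd x) hk
  -- witness chains
  set lx : ℝ → List ℝ :=
    fun x => if h : ∃ l, Chainy g x l ∧ l.length = R x then h.choose else [] with hlxdef
  have hlx_spec : ∀ x ∈ Tone, Chainy g x (lx x) ∧ (lx x).length = R x := by
    intro x hx
    simp only [hlxdef, dif_pos (hmemR x hx)]
    exact (hmemR x hx).choose_spec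
  set e : ℝ → α := fun x => mlgOf g (lx x) with hedef
  have hRle : ∀ x ∈ Tone, R x ≤ K := by
    intro x hx
    obtain ⟨l, hl, hlen⟩ := hmemR x hx
    exact hlen ▸ lenBound x l hl
  -- an uncountable fiber of the rank function
  have hfib : ∃ k, ¬ ({x | x ∈ Tone ∧ R x = k}).Countable := by
    by_contra h
    push_neg at h
    apply Tone_not_countable
    have hsub : Tone ⊆ ⋃ k ∈ Set.Iic K, {x | x ∈ Tone ∧ R x = k} := by
      intro x hx
      exact Set.mem_biUnion (hRle x hx) ⟨hx, rfl⟩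
    exact (Set.Countable.biUnion (Set.to_countable _) (fun k _ => h k)).mono hsub
  obtain ⟨k, hT2⟩ := hfib
  -- key disjointness property
  have key : ∀ s ∈ {x | x ∈ Tone ∧ R x = k}, ∀ t ∈ {x | x ∈ Tone ∧ R x = k},
      rR s t → e s ⊓ g t = ⊥ := by
    intro s hs t ht hst
    by_contra hne
    have hcs := (hlx_spec s hs.1).1
    have hchain : Chainy g t (t :: lx s) := by
      refine ⟨rfl, ?_, ?_, ?_⟩
      · rw [List.pairwise_cons]
        refine ⟨?_, hcs.2.1⟩
        intro u hu
        rcases chainy_mem_le hcs u hu with rfl | h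
        · exact hst
        · exact _root_.trans (r := rR) h hst
      · intro u hu
        rcases List.mem_cons.mp hu with rfl | hu
        · exact ht.1
        · exact hcs.2.2.1 u hu
      · rw [mlgOf_cons]
        intro hbot
        apply hne
        rw [inf_comm] at hbot
        exact hbot
    have hk1 : k + 1 ≤ R t := by
      apply hRub t
      refine ⟨t :: lx s, hchain, ?_⟩
      simp [(hlx_spec s hs.1).2, hs.2]
    rw [ht.2] at hk1
    omega
  -- the injection into ℕ
  set φ : ℝ → ℕ := fun x => if h : mlgOf g (lx x) ≠ ⊥ then (happrox _ h).choose else 0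
    with hφdef
  have hφ_spec : ∀ x ∈ {x | x ∈ Tone ∧ R x = k}, 1 / 2 < μs (φ x) (e x) := by
    intro x hx
    have hx1 := (hlx_spec x hx.1).1.2.2.2
    simp only [hφdef, dif_pos hx1, hedef]
    exact (happrox _ hx1).choose_spec
  have hkey2 : ∀ s ∈ {x | x ∈ Tone ∧ R x = k}, ∀ t ∈ {x | x ∈ Tone ∧ R x = k},
      rR s t → φ s ≠ φ t := by
    intro s hs t ht hst heq
    have h1 := hφ_spec s hs
    have h2 := hφ_spec t ht
    rw [heq] at h1
    have hdisj : e s ⊓ e t = ⊥ := by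
      apply le_bot_iff.mp
      have het : e t ≤ g t := by
        obtain ⟨rest, hrest⟩ := chainy_dest (hlx_spec t ht.1).1
        simp only [hedef, hrest, mlgOf_cons]
        exact inf_le_left
      calc e s ⊓ e t ≤ e s ⊓ g t := inf_le_inf le_rfl het
        _ = ⊥ := key s hs t ht hst
    have hsum := (hprob (φ t)).1.2.2 (e s) (e t) hdisj
    have hle1 := faLeOne (hprob (φ t)) (e s ⊔ e t)
    linarith
  have hinj : Set.InjOn φ {x | x ∈ Tone ∧ R x = k} := by
    intro s hs t ht heq
    by_contra hst
    rcases trichotomous_of rR s t with h | h | h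
    · exact hkey2 s hs t ht h heq
    · exact hst h
    · exact hkey2 t ht s hs h heq.symm
  exact hT2 (Set.countable_iff_exists_injOn.mpr ⟨φ, hinj⟩)

end MN11

theorem stmt11 {α : Type*} [BooleanAlgebra α] (μs : ℕ → α → ℝ)
    (hprob : ∀ n, IsFAProb (μs n))
    (happrox : ∀ a : α, a ≠ ⊥ → ∃ n : ℕ, 1 / 2 < μs n a) :
    ∀ ε : ℝ, 0 < ε → ∃ B : ℕ → Set α,
      (∀ n : ℕ, ∀ a ∈ B n, a ≠ (⊥ : α)) ∧
      (∀ a : α, a ≠ ⊥ → ∃ n : ℕ, a ∈ B n) ∧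
      (∀ n : ℕ, 1 - ε ≤ interNum (B n)) := by
  intro ε hε
  classical
  by_cases hε1 : 1 ≤ ε
  · refine ⟨fun n => if n = 0 then {a : α | a ≠ ⊥} else ∅, ?_, ?_, ?_⟩
    · intro n a ha
      by_cases h : n = 0
      · simp only [h, if_pos rfl] at ha
        exact ha
      · simp [h] at ha
    · intro a ha
      exact ⟨0, by simpa using ha⟩
    · intro n
      have h0 := MN11.interNum_nonneg (if n = 0 then {a : α | a ≠ ⊥} else (∅ : Set α))
      linarith
  · push_neg at hε1
    by_cases hpos : ∃ f : ℕ → α, ∀ a : α, a ≠ ⊥ → ∃ j n : ℕ,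
        0 < μs n (f j) ∧ (1 - ε) * μs n (f j) ≤ μs n (a ⊓ f j)
    · obtain ⟨f, hf⟩ := hpos
      refine ⟨fun k => {a : α | a ≠ ⊥ ∧
          0 < μs (Nat.pairEquiv.symm k).2 (f (Nat.pairEquiv.symm k).1) ∧
          (1 - ε) * μs (Nat.pairEquiv.symm k).2 (f (Nat.pairEquiv.symm k).1) ≤
            μs (Nat.pairEquiv.symm k).2 (a ⊓ f (Nat.pairEquiv.symm k).1)}, ?_, ?_, ?_⟩
      · intro n a ha
        exact ha.1
      · intro a ha
        obtain ⟨j, n, h1, h2⟩ := hf a ha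
        refine ⟨Nat.pairEquiv (j, n), ?_⟩
        have hsymm : Nat.pairEquiv.symm (Nat.pairEquiv (j, n)) = (j, n) :=
          Equiv.symm_apply_apply _ _
        rw [Set.mem_setOf_eq, hsymm]
        exact ⟨ha, h1, h2⟩
      · intro k
        exact MN11.class_le_interNum hε hε1 (hprob (Nat.pairEquiv.symm k).2).1
          (f (Nat.pairEquiv.symm k).1)
    · push_neg at hpos
      exfalso
      have hF1 : ∀ f : ℕ → α, (hpos f).choose ≠ ⊥ := fun f => (hpos f).choose_spec.1
      have hF2 : ∀ f : ℕ → α, ∀ j n, 0 < μs n (f j) →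
          μs n ((hpos f).choose ⊓ f j) < (1 - ε) * μs n (f j) :=
        fun f => (hpos f).choose_spec.2
      exact MN11.neg_false μs ε hprob happrox hε hε1
        (MN11.gfun (fun f => (hpos f).choose))
        (fun x hx => MN11.gfun_unserved μs ε (fun f => (hpos f).choose) hF1 hF2 hx)
end
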